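/- arXiv:2306.05822 — 9 statements merged into one kernel-verified Lean document; each statement's English description precedes it below -/
import Mathlib

section
/- Let X ⊂ ℝ²₁ be a finite subspace with |X| ≥ 4 and let R_X be the minimal axis-parallel rectangle containing X. Then X is trim if and only if each of the four edges of R_X contains at least two points of X; equivalently, at least two points of X have first coordinate equal to min_{p∈X} p₁, at least two have first coordinate equal to max_{p∈X} p₁, at least two have second coordinate equal to min_{p∈X} p₂, and at least two have second coordinate equal to max_{p∈X} p₂. -/
/-- The Manhattan (taxicab) distance on `ℝ × ℝ`. -/
noncomputable def d1 (p q : ℝ × ℝ) : ℝ := |p.1 - q.1| + |p.2 - q.2|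

/-- The Gromov product at `x` with respect to `y` and `z` (Manhattan metric). -/
noncomputable def gromov (x y z : ℝ × ℝ) : ℝ := (d1 x y + d1 x z - d1 y z) / 2

/-- The pendant length of `x` in the finite subspace `X` of the Manhattan plane:
the minimum of the Gromov products at `x` over distinct pairs `y,z ∈ X \ {x}`. -/
noncomputable def pendant (X : Finset (ℝ × ℝ)) (x : ℝ × ℝ) : ℝ :=
  sInf {g : ℝ | ∃ y ∈ X, ∃ z ∈ X, y ≠ x ∧ z ≠ x ∧ y ≠ z ∧ g = gromov x y z}

/-- A finite subspace of the Manhattan plane is trim if all pendant lengths vanish. -/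
def IsTrim (X : Finset (ℝ × ℝ)) : Prop := ∀ x ∈ X, pendant X x = 0

lemma oneD (a b c : ℝ) : |a-b|+|a-c|-|b-c| = 0 ↔ (min b c ≤ a ∧ a ≤ max b c) := by
  rcases abs_cases (a-b) with ⟨e1,i1⟩|⟨e1,i1⟩ <;> rcases abs_cases (a-c) with ⟨e2,i2⟩|⟨e2,i2⟩ <;>
    rcases abs_cases (b-c) with ⟨e3,i3⟩|⟨e3,i3⟩ <;> rw [e1,e2,e3] <;>
    rcases le_total b c with h|h <;>
    simp only [min_eq_left, min_eq_right, max_eq_left, max_eq_right, h] <;>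
    constructor <;> intro hh <;> (try obtain ⟨h1,h2⟩ := hh) <;>
    first
    | exact ⟨by linarith, by linarith⟩
    | linarith

lemma oneD_nonneg (a b c : ℝ) : 0 ≤ |a-b|+|a-c|-|b-c| := by
  have := abs_sub_le b a c
  have := abs_sub_comm b a
  linarith

lemma gromov_nonneg (x y z : ℝ × ℝ) : 0 ≤ gromov x y z := by
  have h1 := oneD_nonneg x.1 y.1 z.1
  have h2 := oneD_nonneg x.2 y.2 z.2
  unfold gromov d1
  linarith

lemma gromov_eq_zero_iff (x y z : ℝ × ℝ) :
    gromov x y z = 0 ↔ (min y.1 z.1 ≤ x.1 ∧ x.1 ≤ max y.1 z.1) ∧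
      (min y.2 z.2 ≤ x.2 ∧ x.2 ≤ max y.2 z.2) := by
  have h1 := oneD_nonneg x.1 y.1 z.1
  have h2 := oneD_nonneg x.2 y.2 z.2
  rw [← oneD x.1 y.1 z.1, ← oneD x.2 y.2 z.2]
  unfold gromov d1
  constructor
  · intro h; constructor <;> linarith
  · intro ⟨a, b⟩; linarith

lemma pendant_eq_zero_iff (X : Finset (ℝ × ℝ)) (x : ℝ × ℝ)
    (hne : ∃ y ∈ X, ∃ z ∈ X, y ≠ x ∧ z ≠ x ∧ y ≠ z) :
    pendant X x = 0 ↔ ∃ y ∈ X, ∃ z ∈ X, y ≠ x ∧ z ≠ x ∧ y ≠ z ∧ gromov x y z = 0 := by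
  set S : Set ℝ := {g : ℝ | ∃ y ∈ X, ∃ z ∈ X, y ≠ x ∧ z ≠ x ∧ y ≠ z ∧ g = gromov x y z} with hS
  have hSfin : S.Finite := by
    apply Set.Finite.subset (Set.Finite.image (fun yz : (ℝ×ℝ)×(ℝ×ℝ) => gromov x yz.1 yz.2)
      (X.finite_toSet.prod X.finite_toSet))
    rintro g ⟨y, hy, z, hz, _, _, _, rfl⟩
    exact ⟨(y, z), ⟨hy, hz⟩, rfl⟩
  have hSne : S.Nonempty := by
    obtain ⟨y, hy, z, hz, h1, h2, h3⟩ := hne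
    exact ⟨gromov x y z, y, hy, z, hz, h1, h2, h3, rfl⟩
  have hlb : ∀ g ∈ S, (0:ℝ) ≤ g := by
    rintro g ⟨y, hy, z, hz, _, _, _, rfl⟩
    exact gromov_nonneg x y z
  constructor
  · intro h
    have := hSne.csInf_mem hSfin
    rw [show sInf S = pendant X x from rfl, h] at this
    obtain ⟨y, hy, z, hz, h1, h2, h3, h4⟩ := this
    exact ⟨y, hy, z, hz, h1, h2, h3, h4.symm⟩
  · rintro ⟨y, hy, z, hz, h1, h2, h3, h4⟩
    have hmem : (0:ℝ) ∈ S := ⟨y, hy, z, hz, h1, h2, h3, h4.symm⟩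
    exact le_antisymm (csInf_le hSfin.bddBelow hmem) (le_csInf hSne hlb)

lemma exists_pair (X : Finset (ℝ × ℝ)) (hcard : 4 ≤ X.card) (x : ℝ × ℝ) :
    ∃ y ∈ X, ∃ z ∈ X, y ≠ x ∧ z ≠ x ∧ y ≠ z := by
  have h : 1 < (X.erase x).card := by
    have := Finset.pred_card_le_card_erase (a := x) (s := X)
    omega
  obtain ⟨y, hy, z, hz, hyz⟩ := Finset.one_lt_card.mp h
  exact ⟨y, Finset.mem_of_mem_erase hy, z, Finset.mem_of_mem_erase hz,
    Finset.ne_of_mem_erase hy, Finset.ne_of_mem_erase hz, hyz⟩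

lemma edge_two (X : Finset (ℝ × ℝ)) (hcard : 4 ≤ X.card) (trim : IsTrim X)
    (f : ℝ × ℝ → ℝ)
    (hf : ∀ x y z : ℝ × ℝ, gromov x y z = 0 → min (f y) (f z) ≤ f x)
    (a : ℝ) (w : ℝ × ℝ) (hw : w ∈ X) (hwa : f w = a)
    (hlow : ∀ p ∈ X, a ≤ f p) :
    2 ≤ (X.filter (fun p => f p = a)).card := by
  have h0 := trim w hw
  rw [pendant_eq_zero_iff X w (exists_pair X hcard w)] at h0
  obtain ⟨y, hy, z, hz, hyx, hzx, hyz, hg⟩ := h0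
  have hmin := hf w y z hg
  rw [hwa] at hmin
  have hy1 := hlow y hy
  have hz1 := hlow z hz
  simp only [min_le_iff] at hmin
  have hkey : f y = a ∨ f z = a := by
    rcases hmin with h | h
    · left; linarith
    · right; linarith
  rcases hkey with h | h
  · refine Finset.one_lt_card.mpr ⟨w, ?_, y, ?_, fun hh => hyx hh.symm⟩ <;>
      simp [Finset.mem_filter, hw, hwa, hy, h]
  · refine Finset.one_lt_card.mpr ⟨w, ?_, z, ?_, fun hh => hzx hh.symm⟩ <;>
      simp [Finset.mem_filter, hw, hwa, hz, h]

lemma build (X : Finset (ℝ × ℝ)) (x y z : ℝ × ℝ) (hy : y ∈ X) (hz : z ∈ X)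
    (hyx : y ≠ x) (hzx : z ≠ x)
    (h1 : min y.1 z.1 ≤ x.1) (h2 : x.1 ≤ max y.1 z.1)
    (h3 : min y.2 z.2 ≤ x.2) (h4 : x.2 ≤ max y.2 z.2) :
    ∃ y ∈ X, ∃ z ∈ X, y ≠ x ∧ z ≠ x ∧ y ≠ z ∧ gromov x y z = 0 := by
  refine ⟨y, hy, z, hz, hyx, hzx, ?_, (gromov_eq_zero_iff x y z).mpr ⟨⟨h1, h2⟩, ⟨h3, h4⟩⟩⟩
  rintro rfl
  apply hyx
  simp only [min_self, max_self] at h1 h2 h3 h4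
  have e1 : x.1 = y.1 := le_antisymm h2 h1
  have e2 : x.2 = y.2 := le_antisymm h4 h3
  exact (Prod.ext e1 e2).symm


/-- A finite subspace `X` of the Manhattan plane with `|X| ≥ 4` is trim iff each edge of
the minimal axis-parallel rectangle `R_X` contains at least two points of `X`. -/
theorem trim_iff_two_points_on_each_edge (X : Finset (ℝ × ℝ)) (hX : X.Nonempty)
    (hcard : 4 ≤ X.card) :
    IsTrim X ↔
      2 ≤ (X.filter (fun p => p.1 = X.inf' hX Prod.fst)).card ∧
      2 ≤ (X.filter (fun p => p.1 = X.sup' hX Prod.fst)).card ∧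
      2 ≤ (X.filter (fun p => p.2 = X.inf' hX Prod.snd)).card ∧
      2 ≤ (X.filter (fun p => p.2 = X.sup' hX Prod.snd)).card := by
  constructor
  · intro trim
    obtain ⟨w1, hw1, e1⟩ := Finset.exists_mem_eq_inf' hX Prod.fst
    obtain ⟨w2, hw2, e2⟩ := Finset.exists_mem_eq_sup' hX Prod.fst
    obtain ⟨w3, hw3, e3⟩ := Finset.exists_mem_eq_inf' hX Prod.snd
    obtain ⟨w4, hw4, e4⟩ := Finset.exists_mem_eq_sup' hX Prod.snd
    refine ⟨?_, ?_, ?_, ?_⟩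
    · exact edge_two X hcard trim Prod.fst
        (fun x y z hg => ((gromov_eq_zero_iff x y z).mp hg).1.1)
        _ w1 hw1 e1.symm (fun p hp => Finset.inf'_le _ hp)
    · have hcongr : (X.filter (fun p => p.1 = X.sup' hX Prod.fst))
          = X.filter (fun p => -p.1 = -(X.sup' hX Prod.fst)) := by
        apply Finset.filter_congr
        intro p _
        constructor <;> intro h <;> linarith
      rw [hcongr]
      refine edge_two X hcard trim (fun p => -p.1) ?_ _ w2 hw2 (by rw [e2]) ?_
      · intro x y z hg
        have := ((gromov_eq_zero_iff x y z).mp hg).1.2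
        simp only [le_max_iff] at this
        simp only [min_le_iff]
        rcases this with h | h
        · left; linarith
        · right; linarith
      · intro p hp
        have := Finset.le_sup' Prod.fst hp
        simp only [neg_le_neg_iff]
        exact this
    · exact edge_two X hcard trim Prod.snd
        (fun x y z hg => ((gromov_eq_zero_iff x y z).mp hg).2.1)
        _ w3 hw3 e3.symm (fun p hp => Finset.inf'_le _ hp)
    · have hcongr : (X.filter (fun p => p.2 = X.sup' hX Prod.snd))
          = X.filter (fun p => -p.2 = -(X.sup' hX Prod.snd)) := by
        apply Finset.filter_congr
        intro p _
        constructor <;> intro h <;> linarith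
      rw [hcongr]
      refine edge_two X hcard trim (fun p => -p.2) ?_ _ w4 hw4 (by rw [e4]) ?_
      · intro x y z hg
        have := ((gromov_eq_zero_iff x y z).mp hg).2.2
        simp only [le_max_iff] at this
        simp only [min_le_iff]
        rcases this with h | h
        · left; linarith
        · right; linarith
      · intro p hp
        have := Finset.le_sup' Prod.snd hp
        simp only [neg_le_neg_iff]
        exact this
  · rintro ⟨hA, hB, hC, hD⟩ x hx
    rw [pendant_eq_zero_iff X x (exists_pair X hcard x)]
    -- extract points on each edge distinct from x
    have hget : ∀ (P : ℝ × ℝ → Prop) [DecidablePred P],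
        2 ≤ (X.filter (fun p => P p)).card → ∃ p ∈ X, p ≠ x ∧ P p := by
      intro P _ h
      obtain ⟨u, hu, v, hv, huv⟩ := Finset.one_lt_card.mp h
      rw [Finset.mem_filter] at hu hv
      by_cases hux : u = x
      · exact ⟨v, hv.1, by rw [← hux]; exact fun hh => huv hh.symm, hv.2⟩
      · exact ⟨u, hu.1, hux, hu.2⟩
    obtain ⟨p, hpX, hpx, hpa⟩ := hget _ hA
    obtain ⟨q, hqX, hqx, hqb⟩ := hget _ hB
    obtain ⟨r, hrX, hrx, hrc⟩ := hget _ hC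
    obtain ⟨s, hsX, hsx, hsd⟩ := hget _ hD
    have hxa : X.inf' hX Prod.fst ≤ x.1 := Finset.inf'_le _ hx
    have hxb : x.1 ≤ X.sup' hX Prod.fst := Finset.le_sup' _ hx
    have hxc : X.inf' hX Prod.snd ≤ x.2 := Finset.inf'_le _ hx
    have hxd : x.2 ≤ X.sup' hX Prod.snd := Finset.le_sup' _ hx
    have hp1 : p.1 ≤ x.1 := by rw [hpa]; exact hxa
    have hq1 : x.1 ≤ q.1 := by rw [hqb]; exact hxb
    have hr2 : r.2 ≤ x.2 := by rw [hrc]; exact hxc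
    have hs2 : x.2 ≤ s.2 := by rw [hsd]; exact hxd
    rcases le_total p.2 x.2 with hp2 | hp2 <;> rcases le_total q.2 x.2 with hq2 | hq2
    · -- both below: use s
      rcases le_total x.1 s.1 with hs1 | hs1
      · exact build X x p s hpX hsX hpx hsx
          (min_le_iff.mpr (Or.inl hp1)) (le_max_iff.mpr (Or.inr hs1))
          (min_le_iff.mpr (Or.inl hp2)) (le_max_iff.mpr (Or.inr hs2))
      · exact build X x s q hsX hqX hsx hqx
          (min_le_iff.mpr (Or.inl hs1)) (le_max_iff.mpr (Or.inr hq1))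
          (min_le_iff.mpr (Or.inr hq2)) (le_max_iff.mpr (Or.inl hs2))
    · exact build X x p q hpX hqX hpx hqx
        (min_le_iff.mpr (Or.inl hp1)) (le_max_iff.mpr (Or.inr hq1))
        (min_le_iff.mpr (Or.inl hp2)) (le_max_iff.mpr (Or.inr hq2))
    · exact build X x p q hpX hqX hpx hqx
        (min_le_iff.mpr (Or.inl hp1)) (le_max_iff.mpr (Or.inr hq1))
        (min_le_iff.mpr (Or.inr hq2)) (le_max_iff.mpr (Or.inl hp2))
    · -- both above: use r
      rcases le_total x.1 r.1 with hr1 | hr1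
      · exact build X x p r hpX hrX hpx hrx
          (min_le_iff.mpr (Or.inl hp1)) (le_max_iff.mpr (Or.inr hr1))
          (min_le_iff.mpr (Or.inr hr2)) (le_max_iff.mpr (Or.inl hp2))
      · exact build X x r q hrX hqX hrx hqx
          (min_le_iff.mpr (Or.inl hr1)) (le_max_iff.mpr (Or.inr hq1))
          (min_le_iff.mpr (Or.inl hr2)) (le_max_iff.mpr (Or.inr hq2))
end

section
/- Let X ⊂ ℝ²₁ be a finite subspace with |X| ≥ 3 and let R_X be the minimal axis-parallel rectangle containing X. If a point x ∈ X lies in the interior of R_X (i.e. min_{p∈X} p₁ < x₁ < max_{p∈X} p₁ and min_{p∈X} p₂ < x₂ < max_{p∈X} p₂), then there exist distinct points y,z ∈ X∖{x} such that x lies between y and z, i.e. d₁(y,z) = d₁(y,x) + d₁(x,z); in particular d̲(x) = 0. -/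
private lemma ne_of_fst' {p q : ℝ × ℝ} (h : p.1 < q.1) : p ≠ q :=
  fun e => absurd (e ▸ h) (lt_irrefl _)

private lemma ne_of_snd' {p q : ℝ × ℝ} (h : p.2 < q.2) : p ≠ q :=
  fun e => absurd (e ▸ h) (lt_irrefl _)

private lemma abs_between {a b c : ℝ}
    (h : a ≤ b ∧ b ≤ c ∨ c ≤ b ∧ b ≤ a) : |a - c| = |a - b| + |b - c| := by
  rcases h with ⟨u, v⟩ | ⟨u, v⟩
  · rw [abs_of_nonpos (by linarith), abs_of_nonpos (by linarith),
      abs_of_nonpos (by linarith)]; ring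
  · rw [abs_of_nonneg (by linarith), abs_of_nonneg (by linarith),
      abs_of_nonneg (by linarith)]; ring

private lemma d1_between {y x z : ℝ × ℝ}
    (h1 : y.1 ≤ x.1 ∧ x.1 ≤ z.1 ∨ z.1 ≤ x.1 ∧ x.1 ≤ y.1)
    (h2 : y.2 ≤ x.2 ∧ x.2 ≤ z.2 ∨ z.2 ≤ x.2 ∧ x.2 ≤ y.2) :
    d1 y z = d1 y x + d1 x z := by
  unfold d1
  have e1 := abs_between h1
  have e2 := abs_between h2
  linarith

/-- A point of a finite `X ⊂ ℝ²₁` (with `|X| ≥ 3`) lying in the interior of the minimal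
axis-parallel rectangle `R_X` lies between two other points of `X`; in particular its
pendant length vanishes. -/
theorem interior_point_is_between (X : Finset (ℝ × ℝ)) (hX : X.Nonempty)
    (hcard : 3 ≤ X.card) (x : ℝ × ℝ) (hx : x ∈ X)
    (h1 : X.inf' hX Prod.fst < x.1) (h2 : x.1 < X.sup' hX Prod.fst)
    (h3 : X.inf' hX Prod.snd < x.2) (h4 : x.2 < X.sup' hX Prod.snd) :
    (∃ y ∈ X, ∃ z ∈ X, y ≠ x ∧ z ≠ x ∧ y ≠ z ∧ d1 y z = d1 y x + d1 x z) ∧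
      pendant X x = 0 := by
  obtain ⟨a, ha, ha1⟩ := (Finset.inf'_lt_iff hX).mp h1
  obtain ⟨b, hb, hb1⟩ := (Finset.lt_sup'_iff hX).mp h2
  obtain ⟨c, hc, hc2⟩ := (Finset.inf'_lt_iff hX).mp h3
  obtain ⟨d, hd, hd2⟩ := (Finset.lt_sup'_iff hX).mp h4
  have key : ∃ y ∈ X, ∃ z ∈ X, y ≠ x ∧ z ≠ x ∧ y ≠ z ∧ d1 y z = d1 y x + d1 x z := by
    rcases le_or_gt a.2 x.2 with ha2 | ha2
    · rcases le_or_gt x.2 b.2 with hb2 | hb2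
      · exact ⟨a, ha, b, hb, ne_of_fst' ha1, (ne_of_fst' hb1).symm,
          ne_of_fst' (ha1.trans hb1),
          d1_between (Or.inl ⟨ha1.le, hb1.le⟩) (Or.inl ⟨ha2, hb2⟩)⟩
      · rcases le_or_gt x.1 d.1 with hd1 | hd1
        · exact ⟨a, ha, d, hd, ne_of_fst' ha1, (ne_of_snd' hd2).symm,
            ne_of_snd' (lt_of_le_of_lt ha2 hd2),
            d1_between (Or.inl ⟨ha1.le, hd1⟩) (Or.inl ⟨ha2, hd2.le⟩)⟩
        · exact ⟨d, hd, b, hb, (ne_of_snd' hd2).symm, (ne_of_fst' hb1).symm,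
            (ne_of_snd' (hb2.trans hd2)).symm,
            d1_between (Or.inl ⟨hd1.le, hb1.le⟩) (Or.inr ⟨hb2.le, hd2.le⟩)⟩
    · rcases le_or_gt b.2 x.2 with hb2 | hb2
      · exact ⟨b, hb, a, ha, (ne_of_fst' hb1).symm, ne_of_fst' ha1,
          (ne_of_fst' (ha1.trans hb1)).symm,
          d1_between (Or.inr ⟨ha1.le, hb1.le⟩) (Or.inl ⟨hb2, ha2.le⟩)⟩
      · rcases le_or_gt c.1 x.1 with hc1 | hc1
        · exact ⟨c, hc, b, hb, ne_of_snd' hc2, (ne_of_fst' hb1).symm,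
            ne_of_fst' (lt_of_le_of_lt hc1 hb1),
            d1_between (Or.inl ⟨hc1, hb1.le⟩) (Or.inl ⟨hc2.le, hb2.le⟩)⟩
        · exact ⟨a, ha, c, hc, ne_of_fst' ha1, ne_of_snd' hc2,
            (ne_of_snd' (hc2.trans ha2)).symm,
            d1_between (Or.inl ⟨ha1.le, hc1.le⟩) (Or.inr ⟨hc2.le, ha2.le⟩)⟩
  refine ⟨key, ?_⟩
  obtain ⟨y, hy, z, hz, hyx, hzx, hyz, heq⟩ := key
  have hsymm : ∀ p q : ℝ × ℝ, d1 p q = d1 q p := by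
    intro p q; unfold d1; rw [abs_sub_comm p.1 q.1, abs_sub_comm p.2 q.2]
  have h0 : (0 : ℝ) ∈ {g : ℝ | ∃ y ∈ X, ∃ z ∈ X, y ≠ x ∧ z ≠ x ∧ y ≠ z ∧ g = gromov x y z} := by
    refine ⟨y, hy, z, hz, hyx, hzx, hyz, ?_⟩
    unfold gromov
    rw [hsymm x y, hsymm x z] at *
    linarith
  have hlb : ∀ g ∈ {g : ℝ | ∃ y ∈ X, ∃ z ∈ X, y ≠ x ∧ z ≠ x ∧ y ≠ z ∧ g = gromov x y z},
      (0 : ℝ) ≤ g := by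
    rintro g ⟨y, -, z, -, -, -, -, rfl⟩
    unfold gromov d1
    have t1 := abs_sub_le y.1 x.1 z.1
    have t2 := abs_sub_le y.2 x.2 z.2
    have c1 : |x.1 - y.1| = |y.1 - x.1| := abs_sub_comm _ _
    have c2 : |x.2 - y.2| = |y.2 - x.2| := abs_sub_comm _ _
    linarith
  unfold pendant
  exact le_antisymm (csInf_le ⟨0, hlb⟩ h0) (le_csInf ⟨0, h0⟩ hlb)
end

section
/- For any three points a, b, c ∈ ℝ²₁ there exists a unique point m ∈ ℝ²₁ satisfying d₁(a,b) = d₁(a,m) + d₁(m,b), d₁(a,c) = d₁(a,m) + d₁(m,c), and d₁(b,c) = d₁(b,m) + d₁(m,c). -/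
lemma abs_btw_iff (x y t : ℝ) : |x - y| = |x - t| + |t - y| ↔ min x y ≤ t ∧ t ≤ max x y := by
  constructor
  · intro hh
    rcases le_total x y with h | h <;> rcases le_total x t with h1 | h1 <;>
      rcases le_total t y with h2 | h2 <;>
    simp_all [abs_of_nonneg, abs_of_nonpos, abs_sub_comm, min_def, max_def] <;>
    first | (constructor <;> linarith) | linarith
  · rintro ⟨h1, h2⟩
    rcases le_total x y with h | h <;>
    simp_all [abs_of_nonneg, abs_of_nonpos, abs_sub_comm, min_def, max_def] <;> linarith

lemma med1 (x y z : ℝ) : ∃! t : ℝ,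
    (|x - y| = |x - t| + |t - y|) ∧ (|x - z| = |x - t| + |t - z|) ∧
    (|y - z| = |y - t| + |t - z|) := by
  simp only [abs_btw_iff]
  refine ⟨max (min x y) (min z (max x y)), ?_, ?_⟩
  · rcases le_total x y with h | h <;> rcases le_total x z with h1 | h1 <;>
      rcases le_total y z with h2 | h2 <;>
    simp_all [min_def, max_def] <;>
    first | (split_ifs <;> norm_num <;> first | (constructor <;> linarith) | linarith)
          | (constructor <;> linarith) | linarith
  · intro t ht
    obtain ⟨⟨ha, hb⟩, ⟨hc, hd⟩, ⟨he, hf⟩⟩ := ht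
    rcases le_total x y with h | h <;> rcases le_total x z with h1 | h1 <;>
      rcases le_total y z with h2 | h2 <;>
    simp_all [min_def, max_def] <;>
    first | (split_ifs <;> linarith) | linarith

lemma d1_split (p q m : ℝ × ℝ) : d1 p q = d1 p m + d1 m q ↔
    (|p.1 - q.1| = |p.1 - m.1| + |m.1 - q.1|) ∧
    (|p.2 - q.2| = |p.2 - m.2| + |m.2 - q.2|) := by
  unfold d1
  constructor
  · intro h
    have h1 := abs_sub_le p.1 m.1 q.1
    have h2 := abs_sub_le p.2 m.2 q.2
    constructor <;> linarith
  · rintro ⟨h1, h2⟩; linarith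

/-- For any three points of the Manhattan plane there is a unique point `m`
(the metric center) lying between each pair of them. -/
theorem existsUnique_metric_center (a b c : ℝ × ℝ) :
    ∃! m : ℝ × ℝ,
      d1 a b = d1 a m + d1 m b ∧
      d1 a c = d1 a m + d1 m c ∧
      d1 b c = d1 b m + d1 m c := by
  obtain ⟨m1, hm1, hu1⟩ := med1 a.1 b.1 c.1
  obtain ⟨m2, hm2, hu2⟩ := med1 a.2 b.2 c.2
  refine ⟨(m1, m2), ?_, ?_⟩
  · simp only [d1_split]
    exact ⟨⟨hm1.1, hm2.1⟩, ⟨hm1.2.1, hm2.2.1⟩, ⟨hm1.2.2, hm2.2.2⟩⟩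
  · intro m hm
    simp only [d1_split] at hm
    have e1 := hu1 m.1 ⟨hm.1.1, hm.2.1.1, hm.2.2.1⟩
    have e2 := hu2 m.2 ⟨hm.1.2, hm.2.1.2, hm.2.2.2⟩
    exact Prod.ext e1 e2
end

section
/- Let X ⊂ ℝ²₁ be a finite subspace with |X| ≥ 3 and let a ∈ X. If b,c ∈ X∖{a} are distinct with Δ_{a,bc} = d̲(a) and d,e ∈ X∖{a} are distinct with Δ_{a,de} = d̲(a) (i.e. both pairs realize the minimal Gromov product at a), then m(a,b,c) = m(a,d,e); hence the metric center m_a associated with a is well defined. -/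
/-- `m` is the metric center of the triple `a, b, c` in the Manhattan plane. -/
noncomputable def IsMetricCenter (a b c m : ℝ × ℝ) : Prop :=
  d1 a b = d1 a m + d1 m b ∧ d1 a c = d1 a m + d1 m c ∧ d1 b c = d1 b m + d1 m c

/-! ### One-dimensional auxiliary functions -/

/-- The median of `0`, `s`, `t`. -/
noncomputable def med1_s6 (s t : ℝ) : ℝ := max (min s t) 0 + min (max s t) 0

/-- The one-dimensional Gromov product piece at `0`. -/
noncomputable def g1 (s t : ℝ) : ℝ := (|s| + |t| - |s - t|) / 2

lemma med1_comm (s t : ℝ) : med1_s6 s t = med1_s6 t s := by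
  simp [med1_s6, min_comm, max_comm]

lemma g1_comm (s t : ℝ) : g1 s t = g1 t s := by
  simp only [g1, abs_sub_comm s t]; ring

lemma med1_neg (s t : ℝ) : med1_s6 (-s) (-t) = - med1_s6 s t := by
  simp only [med1_s6, min_def, max_def]; split_ifs <;> linarith

lemma g1_neg (s t : ℝ) : g1 (-s) (-t) = g1 s t := by
  simp only [g1, abs_neg, neg_sub_neg, abs_sub_comm t s]

set_option maxHeartbeats 2000000 in
lemma g1_eq_abs_med (s t : ℝ) : g1 s t = |med1_s6 s t| := by
  simp only [g1, med1_s6, abs_eq_max_neg, min_def, max_def]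
  split_ifs <;> linarith

lemma med1_between (s t : ℝ) : min s t ≤ med1_s6 s t ∧ med1_s6 s t ≤ max s t := by
  constructor <;> (simp only [med1_s6, min_def, max_def]; split_ifs <;> linarith)

lemma med1_pos_le (s t : ℝ) (h : 0 < med1_s6 s t) : med1_s6 s t ≤ s ∧ med1_s6 s t ≤ t := by
  revert h; simp only [med1_s6, min_def, max_def]; split_ifs <;> intro h <;> constructor <;> linarith

lemma med1_neg_le (s t : ℝ) (h : med1_s6 s t < 0) : s ≤ med1_s6 s t ∧ t ≤ med1_s6 s t := by
  revert h; simp only [med1_s6, min_def, max_def]; split_ifs <;> intro h <;> constructor <;> linarith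

lemma g1_le_max (s t : ℝ) (hs : 0 ≤ s) : g1 s t ≤ max t 0 := by
  revert hs; simp only [g1, abs_eq_max_neg, min_def, max_def]; split_ifs <;> intro hs <;> linarith

lemma g1_le_max' (s t : ℝ) (ht : 0 ≤ t) : g1 s t ≤ max s 0 := by
  rw [g1_comm]; exact g1_le_max t s ht

lemma g1_le_abs_left (s t : ℝ) : g1 s t ≤ |s| := by
  simp only [g1, abs_eq_max_neg, min_def, max_def]; split_ifs <;> linarith

lemma g1_opp (s t : ℝ) (hs : 0 ≤ s) (ht : t ≤ 0) : g1 s t ≤ 0 := by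
  have := g1_le_max s t hs; rw [max_eq_right ht] at this; exact this

lemma g1_opp' (s t : ℝ) (hs : s ≤ 0) (ht : 0 ≤ t) : g1 s t ≤ 0 := by
  rw [g1_comm]; exact g1_opp t s ht hs

lemma med1_nonneg_min (s t : ℝ) (hs : 0 ≤ s) (ht : 0 ≤ t) : med1_s6 s t = min s t := by
  simp only [med1_s6, min_def, max_def]; split_ifs <;> linarith

lemma med1_nonpos_max (s t : ℝ) (hs : s ≤ 0) (ht : t ≤ 0) : med1_s6 s t = max s t := by
  simp only [med1_s6, min_def, max_def]; split_ifs <;> linarith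

lemma med1_min_choice (s t : ℝ) : s ≤ med1_s6 s t ∨ t ≤ med1_s6 s t := by
  rcases le_total s t with h | h
  · left; have := (med1_between s t).1; rw [min_eq_left h] at this; exact this
  · right; have := (med1_between s t).1; rw [min_eq_right h] at this; exact this

lemma g1_choice (s t x : ℝ) : g1 s x ≤ |med1_s6 s t| ∨ g1 t x ≤ |med1_s6 s t| := by
  rcases le_total 0 s with hs | hs <;> rcases le_total 0 t with ht | ht
  · rw [med1_nonneg_min s t hs ht, abs_of_nonneg (le_min hs ht)]
    rcases le_total s t with h | h
    · left
      calc g1 s x ≤ |s| := g1_le_abs_left s x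
        _ = s := abs_of_nonneg hs
        _ = min s t := (min_eq_left h).symm
    · right
      calc g1 t x ≤ |t| := g1_le_abs_left t x
        _ = t := abs_of_nonneg ht
        _ = min s t := (min_eq_right h).symm
  · rcases le_total 0 x with hx | hx
    · right; exact le_trans (g1_opp' t x ht hx) (abs_nonneg _)
    · left; exact le_trans (g1_opp s x hs hx) (abs_nonneg _)
  · rcases le_total 0 x with hx | hx
    · left; exact le_trans (g1_opp' s x hs hx) (abs_nonneg _)
    · right; exact le_trans (g1_opp t x ht hx) (abs_nonneg _)
  · rw [med1_nonpos_max s t hs ht, abs_of_nonpos (max_le hs ht)]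
    rcases le_total s t with h | h
    · right
      calc g1 t x ≤ |t| := g1_le_abs_left t x
        _ = -t := abs_of_nonpos ht
        _ = -(max s t) := by rw [max_eq_right h]
    · left
      calc g1 s x ≤ |s| := g1_le_abs_left s x
        _ = -s := abs_of_nonpos hs
        _ = -(max s t) := by rw [max_eq_left h]

lemma sign_abs_eq (x y : ℝ) (h : |x| = |y|) (h1 : ¬(0 < x ∧ y < 0)) (h2 : ¬(0 < y ∧ x < 0)) :
    x = y := by
  rcases le_total x 0 with hx | hx <;> rcases le_total y 0 with hy | hy
  · rw [abs_of_nonpos hx, abs_of_nonpos hy] at h; linarith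
  · rw [abs_of_nonpos hx, abs_of_nonneg hy] at h
    rcases eq_or_lt_of_le hx with h' | h'
    · linarith
    · exact absurd ⟨by linarith, h'⟩ h2
  · rw [abs_of_nonneg hx, abs_of_nonpos hy] at h
    rcases eq_or_lt_of_le hy with h' | h'
    · linarith
    · exact absurd ⟨by linarith, h'⟩ h1
  · rw [abs_of_nonneg hx, abs_of_nonneg hy] at h; linarith

lemma betw_of_eq (a b x : ℝ) (h : |a - b| = |a - x| + |x - b|) :
    min a b ≤ x ∧ x ≤ max a b := by
  constructor <;>
    (simp only [abs_eq_max_neg, min_def, max_def] at h ⊢; split_ifs at h ⊢ <;> linarith)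

lemma betw3_unique (a b c x y : ℝ)
    (hx1 : min a b ≤ x) (hx2 : x ≤ max a b) (hx3 : min a c ≤ x) (hx4 : x ≤ max a c)
    (hx5 : min b c ≤ x) (hx6 : x ≤ max b c)
    (hy1 : min a b ≤ y) (hy2 : y ≤ max a b) (hy3 : min a c ≤ y) (hy4 : y ≤ max a c)
    (hy5 : min b c ≤ y) (hy6 : y ≤ max b c) : x = y := by
  simp only [min_def, max_def] at *; split_ifs at * <;> linarith

lemma med1_betw3 (a b c : ℝ) :
    (min a b ≤ a + med1_s6 (b - a) (c - a) ∧ a + med1_s6 (b - a) (c - a) ≤ max a b) ∧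
    (min a c ≤ a + med1_s6 (b - a) (c - a) ∧ a + med1_s6 (b - a) (c - a) ≤ max a c) ∧
    (min b c ≤ a + med1_s6 (b - a) (c - a) ∧ a + med1_s6 (b - a) (c - a) ≤ max b c) := by
  refine ⟨⟨?_, ?_⟩, ⟨?_, ?_⟩, ⟨?_, ?_⟩⟩ <;>
    (simp only [med1_s6, min_def, max_def]; split_ifs <;> linarith)

/-! ### The key combinatorial lemmas -/

lemma caseI (b1 b2 c1 c2 d1 d2 e1 e2 p : ℝ)
    (hp : med1_s6 b1 c1 + |med1_s6 b2 c2| = p)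
    (hm : 0 < med1_s6 b1 c1) (hn : med1_s6 d1 e1 < 0)
    (hBD : (b1 ≠ d1 ∨ b2 ≠ d2) → p ≤ g1 b1 d1 + g1 b2 d2)
    (hCD : (c1 ≠ d1 ∨ c2 ≠ d2) → p ≤ g1 c1 d1 + g1 c2 d2) : False := by
  obtain ⟨hb1, hc1⟩ := med1_pos_le _ _ hm
  obtain ⟨hd1, -⟩ := med1_neg_le _ _ hn
  rcases g1_choice b2 c2 d2 with h | h
  · have hx := hBD (Or.inl (ne_of_gt (show d1 < b1 by linarith)))
    have hz : g1 b1 d1 ≤ 0 := g1_opp _ _ (by linarith) (by linarith)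
    linarith
  · have hx := hCD (Or.inl (ne_of_gt (show d1 < c1 by linarith)))
    have hz : g1 c1 d1 ≤ 0 := g1_opp _ _ (by linarith) (by linarith)
    linarith

lemma caseII (b1 b2 c1 c2 d1 d2 e1 e2 p : ℝ)
    (hp : med1_s6 b1 c1 + med1_s6 b2 c2 = p)
    (h1 : 0 ≤ med1_s6 d1 e1) (h2 : med1_s6 d1 e1 < med1_s6 b1 c1)
    (h3 : 0 ≤ med1_s6 b2 c2) (h4 : med1_s6 b2 c2 < med1_s6 d2 e2)
    (hBD : (b1 ≠ d1 ∨ b2 ≠ d2) → p ≤ g1 b1 d1 + g1 b2 d2)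
    (hBE : (b1 ≠ e1 ∨ b2 ≠ e2) → p ≤ g1 b1 e1 + g1 b2 e2)
    (hCD : (c1 ≠ d1 ∨ c2 ≠ d2) → p ≤ g1 c1 d1 + g1 c2 d2)
    (hCE : (c1 ≠ e1 ∨ c2 ≠ e2) → p ≤ g1 c1 e1 + g1 c2 e2) : False := by
  have hm1 : 0 < med1_s6 b1 c1 := h1.trans_lt h2
  obtain ⟨hb1, hc1⟩ := med1_pos_le _ _ hm1
  have hn2 : 0 < med1_s6 d2 e2 := h3.trans_lt h4
  obtain ⟨hd2, he2⟩ := med1_pos_le _ _ hn2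
  rcases med1_min_choice d1 e1 with hv | hv <;> rcases med1_min_choice b2 c2 with hu | hu
  · have hx := hBD (Or.inr (ne_of_lt (show b2 < d2 by linarith)))
    have gb1 : g1 b1 d1 ≤ med1_s6 d1 e1 := le_trans (g1_le_max _ _ (by linarith)) (max_le hv h1)
    have gb2 : g1 b2 d2 ≤ med1_s6 b2 c2 := le_trans (g1_le_max' _ _ (by linarith)) (max_le hu h3)
    linarith
  · have hx := hCD (Or.inr (ne_of_lt (show c2 < d2 by linarith)))
    have gb1 : g1 c1 d1 ≤ med1_s6 d1 e1 := le_trans (g1_le_max _ _ (by linarith)) (max_le hv h1)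
    have gb2 : g1 c2 d2 ≤ med1_s6 b2 c2 := le_trans (g1_le_max' _ _ (by linarith)) (max_le hu h3)
    linarith
  · have hx := hBE (Or.inr (ne_of_lt (show b2 < e2 by linarith)))
    have gb1 : g1 b1 e1 ≤ med1_s6 d1 e1 := le_trans (g1_le_max _ _ (by linarith)) (max_le hv h1)
    have gb2 : g1 b2 e2 ≤ med1_s6 b2 c2 := le_trans (g1_le_max' _ _ (by linarith)) (max_le hu h3)
    linarith
  · have hx := hCE (Or.inr (ne_of_lt (show c2 < e2 by linarith)))
    have gb1 : g1 c1 e1 ≤ med1_s6 d1 e1 := le_trans (g1_le_max _ _ (by linarith)) (max_le hv h1)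
    have gb2 : g1 c2 e2 ≤ med1_s6 b2 c2 := le_trans (g1_le_max' _ _ (by linarith)) (max_le hu h3)
    linarith

lemma stepPos (b1 b2 c1 c2 d1 d2 e1 e2 p : ℝ)
    (E1 : |med1_s6 b1 c1| + |med1_s6 b2 c2| = p)
    (E2 : |med1_s6 d1 e1| + |med1_s6 d2 e2| = p)
    (hm1 : 0 < med1_s6 b1 c1) (hn1 : 0 ≤ med1_s6 d1 e1) (hlt : med1_s6 d1 e1 < med1_s6 b1 c1)
    (A3 : ¬(0 < med1_s6 b2 c2 ∧ med1_s6 d2 e2 < 0)) (A4 : ¬(0 < med1_s6 d2 e2 ∧ med1_s6 b2 c2 < 0))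
    (hBD : (b1 ≠ d1 ∨ b2 ≠ d2) → p ≤ g1 b1 d1 + g1 b2 d2)
    (hBE : (b1 ≠ e1 ∨ b2 ≠ e2) → p ≤ g1 b1 e1 + g1 b2 e2)
    (hCD : (c1 ≠ d1 ∨ c2 ≠ d2) → p ≤ g1 c1 d1 + g1 c2 d2)
    (hCE : (c1 ≠ e1 ∨ c2 ≠ e2) → p ≤ g1 c1 e1 + g1 c2 e2) : False := by
  rw [abs_of_pos hm1] at E1
  rw [abs_of_nonneg hn1] at E2
  have h2abs : |med1_s6 b2 c2| < |med1_s6 d2 e2| := by linarith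
  have hn2ne : med1_s6 d2 e2 ≠ 0 := by
    intro h; rw [h, abs_zero] at h2abs; exact absurd h2abs (not_lt.mpr (abs_nonneg _))
  rcases hn2ne.lt_or_gt with hneg | hpos
  · have hm2 : med1_s6 b2 c2 ≤ 0 := by
      by_contra h; exact A3 ⟨lt_of_not_ge (fun q => h (by linarith)), hneg⟩
    refine caseII b1 (-b2) c1 (-c2) d1 (-d2) e1 (-e2) p ?_ hn1 hlt ?_ ?_ ?_ ?_ ?_ ?_
    · rw [med1_neg]; rw [abs_of_nonpos hm2] at E1; linarith
    · rw [med1_neg]; linarith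
    · rw [med1_neg, med1_neg]
      rw [abs_of_nonpos hm2, abs_of_nonpos (le_of_lt hneg)] at h2abs; linarith
    · intro h
      rw [g1_neg]
      exact hBD (h.imp id (fun hh q => hh (by rw [q])))
    · intro h
      rw [g1_neg]
      exact hBE (h.imp id (fun hh q => hh (by rw [q])))
    · intro h
      rw [g1_neg]
      exact hCD (h.imp id (fun hh q => hh (by rw [q])))
    · intro h
      rw [g1_neg]
      exact hCE (h.imp id (fun hh q => hh (by rw [q])))
  · have hm2 : 0 ≤ med1_s6 b2 c2 := by
      by_contra h; exact A4 ⟨hpos, lt_of_not_ge h⟩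
    refine caseII b1 b2 c1 c2 d1 d2 e1 e2 p ?_ hn1 hlt hm2 ?_ hBD hBE hCD hCE
    · rw [abs_of_nonneg hm2] at E1; linarith
    · rw [abs_of_nonneg hm2, abs_of_pos hpos] at h2abs; exact h2abs

lemma core (b1 b2 c1 c2 d1 d2 e1 e2 p : ℝ)
    (hbc : g1 b1 c1 + g1 b2 c2 = p)
    (hde : g1 d1 e1 + g1 d2 e2 = p)
    (hBD : (b1 ≠ d1 ∨ b2 ≠ d2) → p ≤ g1 b1 d1 + g1 b2 d2)
    (hBE : (b1 ≠ e1 ∨ b2 ≠ e2) → p ≤ g1 b1 e1 + g1 b2 e2)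
    (hCD : (c1 ≠ d1 ∨ c2 ≠ d2) → p ≤ g1 c1 d1 + g1 c2 d2)
    (hCE : (c1 ≠ e1 ∨ c2 ≠ e2) → p ≤ g1 c1 e1 + g1 c2 e2) :
    med1_s6 b1 c1 = med1_s6 d1 e1 ∧ med1_s6 b2 c2 = med1_s6 d2 e2 := by
  have E1 : |med1_s6 b1 c1| + |med1_s6 b2 c2| = p := by
    rw [← g1_eq_abs_med, ← g1_eq_abs_med]; exact hbc
  have E2 : |med1_s6 d1 e1| + |med1_s6 d2 e2| = p := by
    rw [← g1_eq_abs_med, ← g1_eq_abs_med]; exact hde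
  have hDB : (d1 ≠ b1 ∨ d2 ≠ b2) → p ≤ g1 d1 b1 + g1 d2 b2 := fun h => by
    rw [g1_comm d1 b1, g1_comm d2 b2]; exact hBD (h.imp Ne.symm Ne.symm)
  have hDC : (d1 ≠ c1 ∨ d2 ≠ c2) → p ≤ g1 d1 c1 + g1 d2 c2 := fun h => by
    rw [g1_comm d1 c1, g1_comm d2 c2]; exact hCD (h.imp Ne.symm Ne.symm)
  have hEB : (e1 ≠ b1 ∨ e2 ≠ b2) → p ≤ g1 e1 b1 + g1 e2 b2 := fun h => by
    rw [g1_comm e1 b1, g1_comm e2 b2]; exact hBE (h.imp Ne.symm Ne.symm)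
  have hEC : (e1 ≠ c1 ∨ e2 ≠ c2) → p ≤ g1 e1 c1 + g1 e2 c2 := fun h => by
    rw [g1_comm e1 c1, g1_comm e2 c2]; exact hCE (h.imp Ne.symm Ne.symm)
  have hBD2 : (b2 ≠ d2 ∨ b1 ≠ d1) → p ≤ g1 b2 d2 + g1 b1 d1 := fun h => by
    have := hBD h.symm; linarith
  have hCD2 : (c2 ≠ d2 ∨ c1 ≠ d1) → p ≤ g1 c2 d2 + g1 c1 d1 := fun h => by
    have := hCD h.symm; linarith
  have hDB2 : (d2 ≠ b2 ∨ d1 ≠ b1) → p ≤ g1 d2 b2 + g1 d1 b1 := fun h => by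
    have := hDB h.symm; linarith
  have hEB2 : (e2 ≠ b2 ∨ e1 ≠ b1) → p ≤ g1 e2 b2 + g1 e1 b1 := fun h => by
    have := hEB h.symm; linarith
  have A1 : ¬(0 < med1_s6 b1 c1 ∧ med1_s6 d1 e1 < 0) := by
    rintro ⟨h1, h2⟩
    exact caseI b1 b2 c1 c2 d1 d2 e1 e2 p (by rw [← abs_of_pos h1]; exact E1) h1 h2 hBD hCD
  have A2 : ¬(0 < med1_s6 d1 e1 ∧ med1_s6 b1 c1 < 0) := by
    rintro ⟨h1, h2⟩
    exact caseI d1 d2 e1 e2 b1 b2 c1 c2 p (by rw [← abs_of_pos h1]; exact E2) h1 h2 hDB hEB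
  have A3 : ¬(0 < med1_s6 b2 c2 ∧ med1_s6 d2 e2 < 0) := by
    rintro ⟨h1, h2⟩
    refine caseI b2 b1 c2 c1 d2 d1 e2 e1 p ?_ h1 h2 hBD2 hCD2
    rw [← abs_of_pos h1]; linarith
  have A4 : ¬(0 < med1_s6 d2 e2 ∧ med1_s6 b2 c2 < 0) := by
    rintro ⟨h1, h2⟩
    refine caseI d2 d1 e2 e1 b2 b1 c2 c1 p ?_ h1 h2 hDB2 hEB2
    rw [← abs_of_pos h1]; linarith
  have key1 : med1_s6 b1 c1 = med1_s6 d1 e1 := by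
    by_contra hne
    have habs : |med1_s6 b1 c1| ≠ |med1_s6 d1 e1| := fun h => hne (sign_abs_eq _ _ h A1 A2)
    rcases lt_or_gt_of_ne habs with hlt | hlt
    · rcases lt_trichotomy (med1_s6 d1 e1) 0 with h | h | h
      · have hm1 : med1_s6 b1 c1 ≤ 0 := by
          by_contra q; exact A1 ⟨lt_of_not_ge q, h⟩
        refine stepPos (-d1) d2 (-e1) e2 (-b1) b2 (-c1) c2 p
          (by rw [med1_neg, abs_neg]; exact E2) (by rw [med1_neg, abs_neg]; exact E1)
          (by rw [med1_neg]; linarith) (by rw [med1_neg]; linarith) ?_ A4 A3 ?_ ?_ ?_ ?_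
        · rw [med1_neg, med1_neg]
          rw [abs_of_nonpos hm1, abs_of_nonpos (le_of_lt h)] at hlt; linarith
        · intro hh
          rw [g1_neg, g1_comm d1 b1, g1_comm d2 b2]
          exact hBD (hh.imp (fun q e => q (by rw [e])) Ne.symm)
        · intro hh
          rw [g1_neg, g1_comm d1 c1, g1_comm d2 c2]
          exact hCD (hh.imp (fun q e => q (by rw [e])) Ne.symm)
        · intro hh
          rw [g1_neg, g1_comm e1 b1, g1_comm e2 b2]
          exact hBE (hh.imp (fun q e => q (by rw [e])) Ne.symm)
        · intro hh
          rw [g1_neg, g1_comm e1 c1, g1_comm e2 c2]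
          exact hCE (hh.imp (fun q e => q (by rw [e])) Ne.symm)
      · rw [h, abs_zero] at hlt; exact absurd hlt (not_lt.mpr (abs_nonneg _))
      · have hm1 : 0 ≤ med1_s6 b1 c1 := by
          by_contra q; exact A2 ⟨h, lt_of_not_ge q⟩
        refine stepPos d1 d2 e1 e2 b1 b2 c1 c2 p E2 E1 h hm1 ?_ A4 A3 hDB hDC hEB hEC
        rw [abs_of_nonneg hm1, abs_of_pos h] at hlt; exact hlt
    · rcases lt_trichotomy (med1_s6 b1 c1) 0 with h | h | h
      · have hn1 : med1_s6 d1 e1 ≤ 0 := by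
          by_contra q; exact A2 ⟨lt_of_not_ge q, h⟩
        refine stepPos (-b1) b2 (-c1) c2 (-d1) d2 (-e1) e2 p
          (by rw [med1_neg, abs_neg]; exact E1) (by rw [med1_neg, abs_neg]; exact E2)
          (by rw [med1_neg]; linarith) (by rw [med1_neg]; linarith) ?_ A3 A4 ?_ ?_ ?_ ?_
        · rw [med1_neg, med1_neg]
          rw [abs_of_nonpos hn1, abs_of_nonpos (le_of_lt h)] at hlt; linarith
        · intro hh
          rw [g1_neg]
          exact hBD (hh.imp (fun q e => q (by rw [e])) id)
        · intro hh
          rw [g1_neg]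
          exact hBE (hh.imp (fun q e => q (by rw [e])) id)
        · intro hh
          rw [g1_neg]
          exact hCD (hh.imp (fun q e => q (by rw [e])) id)
        · intro hh
          rw [g1_neg]
          exact hCE (hh.imp (fun q e => q (by rw [e])) id)
      · rw [h, abs_zero] at hlt; exact absurd hlt (not_lt.mpr (abs_nonneg _))
      · have hn1 : 0 ≤ med1_s6 d1 e1 := by
          by_contra q; exact A1 ⟨h, lt_of_not_ge q⟩
        refine stepPos b1 b2 c1 c2 d1 d2 e1 e2 p E1 E2 h hn1 ?_ A3 A4 hBD hBE hCD hCE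
        rw [abs_of_nonneg hn1, abs_of_pos h] at hlt; exact hlt
  refine ⟨key1, ?_⟩
  have habs2 : |med1_s6 b2 c2| = |med1_s6 d2 e2| := by rw [key1] at E1; linarith
  exact sign_abs_eq _ _ habs2 A3 A4

/-! ### Plumbing between the 2D definitions and the 1D functions -/

lemma gromov_eq (a y z : ℝ × ℝ) :
    gromov a y z = g1 (y.1 - a.1) (z.1 - a.1) + g1 (y.2 - a.2) (z.2 - a.2) := by
  simp only [gromov, d1, g1]
  rw [abs_sub_comm a.1 y.1, abs_sub_comm a.2 y.2, abs_sub_comm a.1 z.1, abs_sub_comm a.2 z.2,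
    sub_sub_sub_cancel_right, sub_sub_sub_cancel_right]
  ring

lemma center_eq (a y z m : ℝ × ℝ) (h : IsMetricCenter a y z m) :
    m.1 = a.1 + med1_s6 (y.1 - a.1) (z.1 - a.1) ∧ m.2 = a.2 + med1_s6 (y.2 - a.2) (z.2 - a.2) := by
  obtain ⟨h1, h2, h3⟩ := h
  simp only [d1] at h1 h2 h3
  have t1 := abs_sub_le a.1 m.1 y.1
  have t1' := abs_sub_le a.2 m.2 y.2
  have t2 := abs_sub_le a.1 m.1 z.1
  have t2' := abs_sub_le a.2 m.2 z.2
  have t3 := abs_sub_le y.1 m.1 z.1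
  have t3' := abs_sub_le y.2 m.2 z.2
  have c1 : |a.1 - y.1| = |a.1 - m.1| + |m.1 - y.1| := by linarith
  have c1' : |a.2 - y.2| = |a.2 - m.2| + |m.2 - y.2| := by linarith
  have c2 : |a.1 - z.1| = |a.1 - m.1| + |m.1 - z.1| := by linarith
  have c2' : |a.2 - z.2| = |a.2 - m.2| + |m.2 - z.2| := by linarith
  have c3 : |y.1 - z.1| = |y.1 - m.1| + |m.1 - z.1| := by linarith
  have c3' : |y.2 - z.2| = |y.2 - m.2| + |m.2 - z.2| := by linarith
  obtain ⟨u1, u2⟩ := betw_of_eq _ _ _ c1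
  obtain ⟨u3, u4⟩ := betw_of_eq _ _ _ c2
  obtain ⟨u5, u6⟩ := betw_of_eq _ _ _ c3
  obtain ⟨v1, v2⟩ := betw_of_eq _ _ _ c1'
  obtain ⟨v3, v4⟩ := betw_of_eq _ _ _ c2'
  obtain ⟨v5, v6⟩ := betw_of_eq _ _ _ c3'
  obtain ⟨⟨w1, w2⟩, ⟨w3, w4⟩, ⟨w5, w6⟩⟩ := med1_betw3 a.1 y.1 z.1
  obtain ⟨⟨x1, x2⟩, ⟨x3, x4⟩, ⟨x5, x6⟩⟩ := med1_betw3 a.2 y.2 z.2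
  exact ⟨betw3_unique a.1 y.1 z.1 _ _ u1 u2 u3 u4 u5 u6 w1 w2 w3 w4 w5 w6,
         betw3_unique a.2 y.2 z.2 _ _ v1 v2 v3 v4 v5 v6 x1 x2 x3 x4 x5 x6⟩

/-- If two pairs `{b,c}` and `{d,e}` both realize the minimal Gromov product at `a`,
then the metric centers `m(a,b,c)` and `m(a,d,e)` coincide; hence the metric center
associated with `a` is well defined. -/
theorem metric_center_well_defined (X : Finset (ℝ × ℝ)) (hcard : 3 ≤ X.card)
    (a : ℝ × ℝ) (ha : a ∈ X)
    (b c : ℝ × ℝ) (hb : b ∈ X) (hc : c ∈ X) (hba : b ≠ a) (hca : c ≠ a) (hbc : b ≠ c)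
    (hbcmin : gromov a b c = pendant X a)
    (d e : ℝ × ℝ) (hd : d ∈ X) (he : e ∈ X) (hda : d ≠ a) (hea : e ≠ a) (hde : d ≠ e)
    (hdemin : gromov a d e = pendant X a)
    (m₁ m₂ : ℝ × ℝ) (hm₁ : IsMetricCenter a b c m₁) (hm₂ : IsMetricCenter a d e m₂) :
    m₁ = m₂ := by
  have hlow : ∀ y z : ℝ × ℝ, y ∈ X → z ∈ X → y ≠ a → z ≠ a → y ≠ z →
      pendant X a ≤ gromov a y z := by
    intro y z hy hz hya hza hyz
    have hfin : ({g : ℝ | ∃ y ∈ X, ∃ z ∈ X, y ≠ a ∧ z ≠ a ∧ y ≠ z ∧ g = gromov a y z}).Finite := by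
      apply Set.Finite.subset (Set.Finite.image (fun q : (ℝ × ℝ) × (ℝ × ℝ) => gromov a q.1 q.2)
        (Set.Finite.prod X.finite_toSet X.finite_toSet))
      rintro g ⟨y, hy, z, hz, -, -, -, rfl⟩
      exact ⟨(y, z), ⟨hy, hz⟩, rfl⟩
    exact csInf_le hfin.bddBelow ⟨y, hy, z, hz, hya, hza, hyz, rfl⟩
  have mk : ∀ y z : ℝ × ℝ, y ∈ X → z ∈ X → y ≠ a → z ≠ a →
      ((y.1 - a.1 ≠ z.1 - a.1 ∨ y.2 - a.2 ≠ z.2 - a.2) →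
        pendant X a ≤ g1 (y.1 - a.1) (z.1 - a.1) + g1 (y.2 - a.2) (z.2 - a.2)) := by
    intro y z hy hz hya hza h
    rw [← gromov_eq]
    apply hlow y z hy hz hya hza
    intro q; rw [q] at h; simp at h
  have hcore := core (b.1 - a.1) (b.2 - a.2) (c.1 - a.1) (c.2 - a.2)
    (d.1 - a.1) (d.2 - a.2) (e.1 - a.1) (e.2 - a.2) (pendant X a)
    (by rw [← gromov_eq]; exact hbcmin) (by rw [← gromov_eq]; exact hdemin)
    (mk b d hb hd hba hda) (mk b e hb he hba hea)
    (mk c d hc hd hca hda) (mk c e hc he hca hea)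
  obtain ⟨k1, k2⟩ := center_eq a b c m₁ hm₁
  obtain ⟨l1, l2⟩ := center_eq a d e m₂ hm₂
  have e1 : m₁.1 = m₂.1 := by rw [k1, l1, hcore.1]
  have e2 : m₁.2 = m₂.2 := by rw [k2, l2, hcore.2]
  exact Prod.ext e1 e2
end

section
/- Let X ⊂ ℝ²₁ be a finite subspace with |X| ≥ 3, let a, x ∈ X, and let m_a and m_x be the metric centers associated with a and x respectively. Then d₁(a,m_x) = d₁(a,m_a) + d₁(m_a,m_x). -/
/-- `m` is the metric center associated with the point `a` of the finite subspace `X`: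
`m = m(a,b,c)` for some pair of distinct points `b, c ∈ X \ {a}` realizing the minimal
Gromov product (the pendant length) at `a`. -/
noncomputable def IsCenterOf (X : Finset (ℝ × ℝ)) (a m : ℝ × ℝ) : Prop :=
  ∃ b ∈ X, ∃ c ∈ X, b ≠ a ∧ c ≠ a ∧ b ≠ c ∧ gromov a b c = pendant X a ∧
    IsMetricCenter a b c m


/-- 1D betweenness. -/
noncomputable def B (α μ β : ℝ) : Prop := |α - β| = |α - μ| + |μ - β|

/-- 1D Gromov product. -/
noncomputable def g (α β γ : ℝ) : ℝ := (|α - β| + |α - γ| - |β - γ|) / 2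

lemma B_iff (α μ β : ℝ) : B α μ β ↔ (α ≤ μ ∧ μ ≤ β) ∨ (β ≤ μ ∧ μ ≤ α) := by
  unfold B
  constructor
  · intro h
    rcases le_total α μ with h1 | h1 <;> rcases le_total μ β with h2 | h2 <;>
      rcases le_total α β with h3 | h3 <;>
      rw [abs_sub_comm α β] at h <;>
      first
        | (left; constructor <;>
            simp only [abs_sub_comm, abs_le, abs_of_nonneg, abs_of_nonpos] at h <;>
            rcases abs_cases (α - β) with ⟨e1, _⟩ | ⟨e1, _⟩ <;>
            rcases abs_cases (α - μ) with ⟨e2, _⟩ | ⟨e2, _⟩ <;>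
            rcases abs_cases (μ - β) with ⟨e3, _⟩ | ⟨e3, _⟩ <;> linarith)
        | (right; constructor <;>
            rcases abs_cases (β - α) with ⟨e1, _⟩ | ⟨e1, _⟩ <;>
            rcases abs_cases (α - μ) with ⟨e2, _⟩ | ⟨e2, _⟩ <;>
            rcases abs_cases (μ - β) with ⟨e3, _⟩ | ⟨e3, _⟩ <;> linarith)
  · rintro (⟨h1, h2⟩ | ⟨h1, h2⟩)
    · rw [abs_of_nonpos (by linarith), abs_of_nonpos (by linarith),
        abs_of_nonpos (by linarith)]; ring
    · rw [abs_of_nonneg (by linarith), abs_of_nonneg (by linarith),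
        abs_of_nonneg (by linarith)]; ring

lemma B_symm {α μ β : ℝ} (h : B α μ β) : B β μ α := by
  rw [B_iff] at h ⊢; tauto

lemma B_neg {α μ β : ℝ} (h : B α μ β) : B (-α) (-μ) (-β) := by
  rw [B_iff] at h ⊢
  rcases h with ⟨h1, h2⟩ | ⟨h1, h2⟩
  · right; constructor <;> linarith
  · left; constructor <;> linarith

lemma g_comm (α β γ : ℝ) : g α β γ = g α γ β := by
  unfold g; rw [abs_sub_comm β γ]; ring

lemma g_neg (α β γ : ℝ) : g (-α) (-β) (-γ) = g α β γ := by
  have h : ∀ s t : ℝ, |(-s) - (-t)| = |s - t| := by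
    intro s t
    rw [show (-s) - (-t) = -(s - t) by ring, abs_neg]
  unfold g; rw [h, h, h]

lemma g_nonneg (α β γ : ℝ) : 0 ≤ g α β γ := by
  have h1 := abs_sub_le β α γ
  have h2 : |β - α| = |α - β| := abs_sub_comm β α
  unfold g; linarith

lemma g_le_abs (α β γ : ℝ) : g α β γ ≤ |α - β| := by
  have h1 := abs_sub_le α β γ
  unfold g; linarith

lemma g_formula_right {α β γ : ℝ} (hβ : α ≤ β) (hγ : α ≤ γ) :
    g α β γ = min β γ - α := by
  unfold g
  rcases le_total β γ with h | h
  · rw [min_eq_left h, abs_of_nonpos (by linarith), abs_of_nonpos (by linarith),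
      abs_of_nonpos (by linarith)]; ring
  · rw [min_eq_right h, abs_of_nonpos (by linarith), abs_of_nonpos (by linarith),
      abs_of_nonneg (by linarith)]; ring

lemma g_below {α β γ : ℝ} (hβ : α ≤ β) (hγ : γ ≤ β) :
    g α β γ = max (γ - α) 0 := by
  unfold g
  rcases le_total α γ with h | h
  · rw [max_eq_left (by linarith), abs_of_nonpos (by linarith),
      abs_of_nonpos (by linarith), abs_of_nonneg (by linarith)]; ring
  · rw [max_eq_right (by linarith), abs_of_nonpos (by linarith),
      abs_of_nonneg (by linarith), abs_of_nonneg (by linarith)]; ring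

lemma g_inside {α β γ : ℝ} (hγ : γ ≤ α) (hβ : α ≤ β) : g α β γ = 0 := by
  unfold g
  rw [abs_of_nonpos (by linarith), abs_of_nonneg (by linarith),
    abs_of_nonneg (by linarith)]; ring

lemma g_push_le {α β γ : ℝ} (hβ : β ≤ α) : g α β γ ≤ max (α - γ) 0 := by
  rcases le_total γ α with h | h
  · have h1 : γ - β ≤ |β - γ| := by
      rw [abs_sub_comm]; exact le_abs_self _
    have h2 : g α β γ ≤ α - γ := by
      unfold g
      rw [abs_of_nonneg (by linarith), abs_of_nonneg (by linarith)]
      linarith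
    exact le_trans h2 (le_max_left _ _)
  · have h2 : g α β γ = 0 := by rw [g_comm]; exact g_inside hβ h
    rw [h2]; exact le_max_right _ _

lemma g_push_ge {α β γ : ℝ} (hβ : α ≤ β) : g α β γ ≤ max (γ - α) 0 := by
  have h := g_push_le (α := -α) (β := -β) (γ := -γ) (by linarith)
  rw [g_neg, show -α - -γ = γ - α by ring] at h
  exact h

/-- Core contradiction: fully normalized configuration. -/
lemma gate_core4 (a1 a2 b1 b2 c1 c2 p1 p2 m1 m2 : ℝ)
    (h1 : a1 < m1) (h2 : p1 < m1) (h3 : a2 ≤ m2) (h4 : b1 ≤ c1)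
    (hb1 : B a1 m1 b1) (hc1 : B a1 m1 c1) (hbc1 : B b1 m1 c1)
    (hb2 : B a2 m2 b2) (hc2 : B a2 m2 c2) (hbc2 : B b2 m2 c2)
    (Hb : g a1 b1 c1 + g a2 b2 c2 ≤ g a1 b1 p1 + g a2 b2 p2)
    (Hc : g a1 b1 c1 + g a2 b2 c2 ≤ g a1 c1 p1 + g a2 c2 p2) : False := by
  -- m1 = b1
  have hm1b : m1 = b1 := by
    rw [B_iff] at hb1 hbc1
    rcases hb1 with ⟨u1, u2⟩ | ⟨u1, u2⟩
    · rcases hbc1 with ⟨v1, v2⟩ | ⟨v1, v2⟩ <;> linarith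
    · linarith
  subst hm1b
  have hac : a1 < c1 := by linarith
  have hpc : p1 < c1 := by linarith
  have e1 : g a1 m1 c1 = m1 - a1 := by
    rw [g_formula_right (le_of_lt h1) (le_of_lt hac), min_eq_left h4]
  have e2 : g a1 m1 p1 = max (p1 - a1) 0 := g_below (le_of_lt h1) (le_of_lt h2)
  have e3 : g a1 c1 p1 = max (p1 - a1) 0 := g_below (le_of_lt hac) (le_of_lt hpc)
  have hM : max (p1 - a1) 0 < m1 - a1 := max_lt (by linarith) (by linarith)
  have K1 : g a2 b2 c2 + (m1 - a1 - max (p1 - a1) 0) ≤ g a2 b2 p2 := by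
    rw [e1, e2] at Hb; linarith
  have K2 : g a2 b2 c2 + (m1 - a1 - max (p1 - a1) 0) ≤ g a2 c2 p2 := by
    rw [e1, e3] at Hc; linarith
  set ε := m1 - a1 - max (p1 - a1) 0 with hεdef
  have hε : 0 < ε := by simp only [hεdef]; linarith
  rw [B_iff] at hb2 hc2 hbc2
  rcases hb2 with ⟨u1, u2⟩ | ⟨u1, u2⟩ <;> rcases hc2 with ⟨v1, v2⟩ | ⟨v1, v2⟩
  · -- a2 ≤ m2 ≤ b2, a2 ≤ m2 ≤ c2
    rcases hbc2 with ⟨w1, w2⟩ | ⟨w1, w2⟩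
    · -- b2 ≤ m2 ≤ c2 so b2 = m2
      have hb2m : b2 = m2 := le_antisymm w1 u2
      have ef : g a2 b2 c2 = b2 - a2 := by
        rw [g_formula_right (le_trans u1 u2) (le_trans v1 v2),
          min_eq_left (by linarith)]
      have hle : g a2 b2 p2 ≤ b2 - a2 := by
        have := g_le_abs a2 b2 p2
        rw [abs_of_nonpos (by linarith)] at this; linarith
      linarith
    · -- c2 ≤ m2 ≤ b2 so c2 = m2
      have hc2m : c2 = m2 := le_antisymm w1 v2
      have ef : g a2 b2 c2 = c2 - a2 := by
        rw [g_formula_right (le_trans u1 u2) (le_trans v1 v2),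
          min_eq_right (by linarith)]
      have hle : g a2 c2 p2 ≤ c2 - a2 := by
        have := g_le_abs a2 c2 p2
        rw [abs_of_nonpos (by linarith)] at this; linarith
      linarith
  · -- a2 ≤ m2 ≤ b2, c2 ≤ m2 ≤ a2 : m2 = a2, c2 ≤ a2 ≤ b2
    have hm2a : m2 = a2 := le_antisymm v2 h3
    have ef : g a2 b2 c2 = 0 := g_inside (by linarith) (by linarith)
    have hK1 : ε ≤ g a2 b2 p2 := by linarith
    have hK2 : ε ≤ g a2 c2 p2 := by linarith
    have hp1 : g a2 b2 p2 ≤ max (p2 - a2) 0 := g_push_ge (by linarith)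
    have hp2 : g a2 c2 p2 ≤ max (a2 - p2) 0 := g_push_le (by linarith)
    rcases max_cases (p2 - a2) 0 with ⟨q1, _⟩ | ⟨q1, _⟩ <;>
      rcases max_cases (a2 - p2) 0 with ⟨q2, _⟩ | ⟨q2, _⟩ <;> linarith
  · -- b2 ≤ m2 ≤ a2, a2 ≤ m2 ≤ c2 : m2 = a2, b2 ≤ a2 ≤ c2
    have hm2a : m2 = a2 := le_antisymm u2 h3
    have ef : g a2 b2 c2 = 0 := by
      rw [g_comm]; exact g_inside (by linarith) (by linarith)
    have hK1 : ε ≤ g a2 b2 p2 := by linarith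
    have hK2 : ε ≤ g a2 c2 p2 := by linarith
    have hp1 : g a2 b2 p2 ≤ max (a2 - p2) 0 := g_push_le (by linarith)
    have hp2 : g a2 c2 p2 ≤ max (p2 - a2) 0 := g_push_ge (by linarith)
    rcases max_cases (p2 - a2) 0 with ⟨q1, _⟩ | ⟨q1, _⟩ <;>
      rcases max_cases (a2 - p2) 0 with ⟨q2, _⟩ | ⟨q2, _⟩ <;> linarith
  · -- b2 ≤ m2 ≤ a2, c2 ≤ m2 ≤ a2 : m2 = a2, b2 = a2 or c2 = a2
    have hm2a : m2 = a2 := le_antisymm u2 h3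
    rcases hbc2 with ⟨w1, w2⟩ | ⟨w1, w2⟩
    · -- b2 ≤ m2 ≤ c2 : c2 = a2
      have hle : g a2 c2 p2 ≤ 0 := by
        have := g_le_abs a2 c2 p2
        rw [show a2 - c2 = 0 by linarith, abs_zero] at this; linarith
      have := g_nonneg a2 b2 c2
      linarith
    · -- c2 ≤ m2 ≤ b2 : b2 = a2
      have hle : g a2 b2 p2 ≤ 0 := by
        have := g_le_abs a2 b2 p2
        rw [show a2 - b2 = 0 by linarith, abs_zero] at this; linarith
      have := g_nonneg a2 b2 c2
      linarith

/-- Eliminate the b ≤ c normalization. -/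
lemma gate_core3 (a1 a2 b1 b2 c1 c2 p1 p2 m1 m2 : ℝ)
    (h1 : a1 < m1) (h2 : p1 < m1) (h3 : a2 ≤ m2)
    (hb1 : B a1 m1 b1) (hc1 : B a1 m1 c1) (hbc1 : B b1 m1 c1)
    (hb2 : B a2 m2 b2) (hc2 : B a2 m2 c2) (hbc2 : B b2 m2 c2)
    (Hb : g a1 b1 c1 + g a2 b2 c2 ≤ g a1 b1 p1 + g a2 b2 p2)
    (Hc : g a1 b1 c1 + g a2 b2 c2 ≤ g a1 c1 p1 + g a2 c2 p2) : False := by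
  rcases le_total b1 c1 with h4 | h4
  · exact gate_core4 a1 a2 b1 b2 c1 c2 p1 p2 m1 m2 h1 h2 h3 h4
      hb1 hc1 hbc1 hb2 hc2 hbc2 Hb Hc
  · refine gate_core4 a1 a2 c1 c2 b1 b2 p1 p2 m1 m2 h1 h2 h3 h4
      hc1 hb1 (B_symm hbc1) hc2 hb2 (B_symm hbc2) ?_ ?_
    · rw [g_comm a1 c1 b1, g_comm a2 c2 b2]; exact Hc
    · rw [g_comm a1 c1 b1, g_comm a2 c2 b2]; exact Hb

/-- Eliminate the a2 ≤ m2 normalization. -/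
lemma gate_core2 (a1 a2 b1 b2 c1 c2 p1 p2 m1 m2 : ℝ)
    (h1 : a1 < m1) (h2 : p1 < m1)
    (hb1 : B a1 m1 b1) (hc1 : B a1 m1 c1) (hbc1 : B b1 m1 c1)
    (hb2 : B a2 m2 b2) (hc2 : B a2 m2 c2) (hbc2 : B b2 m2 c2)
    (Hb : g a1 b1 c1 + g a2 b2 c2 ≤ g a1 b1 p1 + g a2 b2 p2)
    (Hc : g a1 b1 c1 + g a2 b2 c2 ≤ g a1 c1 p1 + g a2 c2 p2) : False := by
  rcases le_total a2 m2 with h3 | h3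
  · exact gate_core3 a1 a2 b1 b2 c1 c2 p1 p2 m1 m2 h1 h2 h3
      hb1 hc1 hbc1 hb2 hc2 hbc2 Hb Hc
  · refine gate_core3 a1 (-a2) b1 (-b2) c1 (-c2) p1 (-p2) m1 (-m2) h1 h2
      (by linarith) hb1 hc1 hbc1 (B_neg hb2) (B_neg hc2) (B_neg hbc2) ?_ ?_
    · rw [g_neg, g_neg]; exact Hb
    · rw [g_neg, g_neg]; exact Hc

/-- Gate lemma, first coordinate. -/
lemma gate_core1 (a1 a2 b1 b2 c1 c2 p1 p2 m1 m2 : ℝ)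
    (hb1 : B a1 m1 b1) (hc1 : B a1 m1 c1) (hbc1 : B b1 m1 c1)
    (hb2 : B a2 m2 b2) (hc2 : B a2 m2 c2) (hbc2 : B b2 m2 c2)
    (Hb : g a1 b1 c1 + g a2 b2 c2 ≤ g a1 b1 p1 + g a2 b2 p2)
    (Hc : g a1 b1 c1 + g a2 b2 c2 ≤ g a1 c1 p1 + g a2 c2 p2) :
    B a1 m1 p1 := by
  by_contra h
  rw [B_iff] at h
  push_neg at h
  obtain ⟨h1, h2⟩ := h
  rcases lt_or_ge a1 m1 with t | t
  · have hp : p1 < m1 := h1 (le_of_lt t)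
    exact gate_core2 a1 a2 b1 b2 c1 c2 p1 p2 m1 m2 t hp
      hb1 hc1 hbc1 hb2 hc2 hbc2 Hb Hc
  · have hp : m1 < p1 := by
      by_contra hcon
      push_neg at hcon
      exact absurd (h2 hcon) (by linarith)
    have ha : m1 < a1 := by
      rcases lt_or_ge m1 a1 with t' | t'
      · exact t'
      · exact absurd (h1 (le_antisymm t' t ▸ le_refl a1)) (by linarith)
    refine gate_core2 (-a1) a2 (-b1) b2 (-c1) c2 (-p1) p2 (-m1) m2
      (by linarith) (by linarith) (B_neg hb1) (B_neg hc1) (B_neg hbc1)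
      hb2 hc2 hbc2 ?_ ?_
    · rw [g_neg, g_neg]; exact Hb
    · rw [g_neg, g_neg]; exact Hc



lemma gromov_split (a u v : ℝ × ℝ) :
    gromov a u v = g a.1 u.1 v.1 + g a.2 u.2 v.2 := by
  unfold gromov d1 g; ring

lemma gromov_nonneg_s8 (a u v : ℝ × ℝ) : 0 ≤ gromov a u v := by
  rw [gromov_split]
  have := g_nonneg a.1 u.1 v.1
  have := g_nonneg a.2 u.2 v.2
  linarith

lemma split_btw {u v m : ℝ × ℝ} (h : d1 u v = d1 u m + d1 m v) :
    B u.1 m.1 v.1 ∧ B u.2 m.2 v.2 := by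
  have t1 : |u.1 - v.1| ≤ |u.1 - m.1| + |m.1 - v.1| := abs_sub_le _ _ _
  have t2 : |u.2 - v.2| ≤ |u.2 - m.2| + |m.2 - v.2| := abs_sub_le _ _ _
  unfold d1 at h
  constructor <;> unfold B <;> linarith

/-- Combination: μ between α and both q, r; ν between q and r ⟹ μ between α and ν. -/
lemma between_combine {α μ q r ν : ℝ} (h1 : B α μ q) (h2 : B α μ r)
    (h3 : B q ν r) : B α μ ν := by
  rw [B_iff] at h1 h2 h3 ⊢
  rcases h1 with ⟨u1, u2⟩ | ⟨u1, u2⟩ <;> rcases h2 with ⟨v1, v2⟩ | ⟨v1, v2⟩ <;>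
    rcases h3 with ⟨w1, w2⟩ | ⟨w1, w2⟩ <;> rcases le_total ν μ with t | t <;>
    first
      | exact Or.inl ⟨by linarith, by linarith⟩
      | exact Or.inr ⟨by linarith, by linarith⟩

lemma pendant_le (X : Finset (ℝ × ℝ)) (a u v : ℝ × ℝ) (hu : u ∈ X) (hv : v ∈ X)
    (hua : u ≠ a) (hva : v ≠ a) (huv : u ≠ v) : pendant X a ≤ gromov a u v := by
  apply csInf_le
  · refine ⟨0, fun t ht => ?_⟩
    obtain ⟨y, _, z, _, _, _, _, rfl⟩ := ht
    exact gromov_nonneg_s8 a y z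
  · exact ⟨u, hu, v, hv, hua, hva, huv, rfl⟩

/-- Gate property: any metric center associated with `a` lies (componentwise)
between `a` and every other point of `X`. -/
lemma gate (X : Finset (ℝ × ℝ)) (a ma : ℝ × ℝ) (hma : IsCenterOf X a ma) :
    ∀ q ∈ X, q ≠ a → B a.1 ma.1 q.1 ∧ B a.2 ma.2 q.2 := by
  obtain ⟨b, hbX, c, hcX, hba, hca, hbc, hgp, hab, hac, hbcm⟩ := hma
  obtain ⟨hab1, hab2⟩ := split_btw hab
  obtain ⟨hac1, hac2⟩ := split_btw hac
  obtain ⟨hbc1, hbc2⟩ := split_btw hbcm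
  intro q hqX hqa
  by_cases hqb : q = b
  · subst hqb; exact ⟨hab1, hab2⟩
  by_cases hqc : q = c
  · subst hqc; exact ⟨hac1, hac2⟩
  have Hb : gromov a b c ≤ gromov a b q := by
    rw [hgp]; exact pendant_le X a b q hbX hqX hba hqa (fun h => hqb h.symm)
  have Hc : gromov a b c ≤ gromov a c q := by
    rw [hgp]; exact pendant_le X a c q hcX hqX hca hqa (fun h => hqc h.symm)
  rw [gromov_split, gromov_split] at Hb Hc
  constructor
  · exact gate_core1 a.1 a.2 b.1 b.2 c.1 c.2 q.1 q.2 ma.1 ma.2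
      hab1 hac1 hbc1 hab2 hac2 hbc2 Hb Hc
  · refine gate_core1 a.2 a.1 b.2 b.1 c.2 c.1 q.2 q.1 ma.2 ma.1
      hab2 hac2 hbc2 hab1 hac1 hbc1 ?_ ?_ <;> linarith


/-- For `a, x ∈ X` with associated metric centers `m_a, m_x`, the center `m_a` lies
between `a` and `m_x`. -/
theorem dist_to_center_split (X : Finset (ℝ × ℝ)) (hcard : 3 ≤ X.card)
    (a x : ℝ × ℝ) (ha : a ∈ X) (hx : x ∈ X)
    (ma mx : ℝ × ℝ) (hma : IsCenterOf X a ma) (hmx : IsCenterOf X x mx) :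
    d1 a mx = d1 a ma + d1 ma mx := by
  have key := gate X a ma hma
  obtain ⟨y, hyX, z, hzX, hyx, hzx, hyz, hgpx, hxy, hxz, hyzm⟩ := hmx
  obtain ⟨hxy1, hxy2⟩ := split_btw hxy
  obtain ⟨hxz1, hxz2⟩ := split_btw hxz
  obtain ⟨hyz1, hyz2⟩ := split_btw hyzm
  have main : B a.1 ma.1 mx.1 ∧ B a.2 ma.2 mx.2 := by
    by_cases hya : y = a
    · -- y = a : use x and z
      have hxa : x ≠ a := fun h => hyx (hya.trans h.symm)
      obtain ⟨k1, k2⟩ := key x hx hxa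
      obtain ⟨l1, l2⟩ := key z hzX (fun h => hyz (hya.trans h.symm))
      exact ⟨between_combine k1 l1 hxz1, between_combine k2 l2 hxz2⟩
    by_cases hza : z = a
    · -- z = a : use x and y
      have hxa : x ≠ a := fun h => hzx (hza.trans h.symm)
      obtain ⟨k1, k2⟩ := key x hx hxa
      obtain ⟨l1, l2⟩ := key y hyX hya
      exact ⟨between_combine k1 l1 hxy1, between_combine k2 l2 hxy2⟩
    · -- y, z ≠ a
      obtain ⟨k1, k2⟩ := key y hyX hya
      obtain ⟨l1, l2⟩ := key z hzX hza
      exact ⟨between_combine k1 l1 hyz1, between_combine k2 l2 hyz2⟩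
  obtain ⟨m1, m2⟩ := main
  unfold B at m1 m2
  unfold d1
  linarith
end

section
/- Let X ⊂ ℝ²₁ be a finite subspace with |X| ≥ 3 and let x, y ∈ X. If d₁(x,y) = d̲(x) + d̲(y) (i.e. x ℜ y in the trimming relation), then the metric centers associated with x and y coincide: m_x = m_y. -/
/-- one-dimensional betweenness -/
def MBtw (a m b : ℝ) : Prop := (a ≤ m ∧ m ≤ b) ∨ (b ≤ m ∧ m ≤ a)

/-- one-dimensional Gromov product -/
noncomputable def mdel (x u v : ℝ) : ℝ := (|x - u| + |x - v| - |u - v|) / 2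

lemma abs_of_btw {a m b : ℝ} (h : MBtw a m b) : |a - b| = |a - m| + |m - b| := by
  rcases h with ⟨h1, h2⟩ | ⟨h1, h2⟩
  · rw [abs_of_nonpos (by linarith : a - b ≤ 0), abs_of_nonpos (by linarith : a - m ≤ 0),
      abs_of_nonpos (by linarith : m - b ≤ 0)]; ring
  · rw [abs_of_nonneg (by linarith : 0 ≤ a - b), abs_of_nonneg (by linarith : 0 ≤ a - m),
      abs_of_nonneg (by linarith : 0 ≤ m - b)]; ring

lemma btw_of_abs {a m b : ℝ} (h : |a - b| = |a - m| + |m - b|) : MBtw a m b := by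
  rcases abs_cases (a - b) with ⟨e1, s1⟩ | ⟨e1, s1⟩ <;>
  rcases abs_cases (a - m) with ⟨e2, s2⟩ | ⟨e2, s2⟩ <;>
  rcases abs_cases (m - b) with ⟨e3, s3⟩ | ⟨e3, s3⟩ <;>
  rw [e1, e2, e3] at h <;>
  first
  | exact Or.inl ⟨by linarith, by linarith⟩
  | exact Or.inr ⟨by linarith, by linarith⟩

lemma btw_symm {a m b : ℝ} (h : MBtw a m b) : MBtw b m a := by
  rcases h with h | h
  · exact Or.inr h
  · exact Or.inl h

lemma d1_comm (p q : ℝ × ℝ) : d1 p q = d1 q p := by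
  simp [d1, abs_sub_comm]

lemma eq_of_d1_zero {p q : ℝ × ℝ} (h : d1 p q = 0) : p = q := by
  simp only [d1] at h
  have n1 := abs_nonneg (p.1 - q.1)
  have n2 := abs_nonneg (p.2 - q.2)
  have h1 : p.1 - q.1 = 0 := abs_eq_zero.mp (by linarith)
  have h2 : p.2 - q.2 = 0 := abs_eq_zero.mp (by linarith)
  exact Prod.ext (by linarith) (by linarith)

lemma gromov_split_s9 (x y z : ℝ × ℝ) :
    gromov x y z = mdel x.1 y.1 z.1 + mdel x.2 y.2 z.2 := by
  simp only [gromov, d1, mdel]; ring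

lemma center_dist {a b c m : ℝ × ℝ} (h : IsMetricCenter a b c m) :
    d1 a m = gromov a b c := by
  obtain ⟨h1, h2, h3⟩ := h
  have := d1_comm b m
  simp only [gromov]; linarith

lemma btw_coords {a m b : ℝ × ℝ} (h : d1 a b = d1 a m + d1 m b) :
    MBtw a.1 m.1 b.1 ∧ MBtw a.2 m.2 b.2 := by
  have t1 : |a.1 - b.1| ≤ |a.1 - m.1| + |m.1 - b.1| := abs_sub_le _ _ _
  have t2 : |a.2 - b.2| ≤ |a.2 - m.2| + |m.2 - b.2| := abs_sub_le _ _ _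
  simp only [d1] at h
  constructor
  · exact btw_of_abs (le_antisymm t1 (by linarith))
  · exact btw_of_abs (le_antisymm t2 (by linarith))

lemma del_comm (x u v : ℝ) : mdel x u v = mdel x v u := by
  simp only [mdel]; rw [abs_sub_comm u v]; ring

lemma key3 {x z b m : ℝ} (hb : MBtw x m b) (hf : |x - z| < |x - m| + |m - z|) :
    |m - b| + |m - z| ≤ |z - b| := by
  rcases hb with ⟨h1, h2⟩ | ⟨h1, h2⟩ <;>
  rcases abs_cases (x - z) with ⟨e1, s1⟩ | ⟨e1, s1⟩ <;>
  rcases abs_cases (x - m) with ⟨e2, s2⟩ | ⟨e2, s2⟩ <;>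
  rcases abs_cases (m - z) with ⟨e3, s3⟩ | ⟨e3, s3⟩ <;>
  rcases abs_cases (m - b) with ⟨e4, s4⟩ | ⟨e4, s4⟩ <;>
  rcases abs_cases (z - b) with ⟨e5, s5⟩ | ⟨e5, s5⟩ <;>
  rw [e1, e2, e3] at hf <;> rw [e4, e5] at * <;> linarith

lemma keyE1 {x z b c m : ℝ} (hb : MBtw x m b) (hc : MBtw x m c) (hbc : MBtw b m c)
    (hf : |x - z| < |x - m| + |m - z|) :
    mdel x z b ≤ mdel x b c - (|x - m| + |m - z| - |x - z|) / 2 := by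
  have e1 := abs_of_btw hb
  have e2 := abs_of_btw hc
  have e3 := abs_of_btw hbc
  have key := key3 hb hf
  have hcm : |b - m| = |m - b| := abs_sub_comm b m
  simp only [mdel]
  linarith

lemma keyE2 (x z b c : ℝ) : mdel x z b ≤ mdel x b c ∨ mdel x z c ≤ mdel x b c := by
  simp only [mdel]
  rcases abs_cases (x - z) with ⟨e1, s1⟩ | ⟨e1, s1⟩ <;>
  rcases abs_cases (x - b) with ⟨e2, s2⟩ | ⟨e2, s2⟩ <;>
  rcases abs_cases (z - b) with ⟨e3, s3⟩ | ⟨e3, s3⟩ <;>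
  rcases abs_cases (x - c) with ⟨e4, s4⟩ | ⟨e4, s4⟩ <;>
  rcases abs_cases (b - c) with ⟨e5, s5⟩ | ⟨e5, s5⟩ <;>
  rcases abs_cases (z - c) with ⟨e6, s6⟩ | ⟨e6, s6⟩ <;>
  rw [e1, e2, e3, e4, e5, e6] <;>
  first
  | exact Or.inl (by linarith)
  | exact Or.inr (by linarith)

lemma keyF {x y z mx my : ℝ} (h1 : MBtw x mx y) (h2 : MBtw x my y)
    (h3 : MBtw x mx z) (h4 : MBtw y my z) : MBtw x mx my := by
  rcases h1 with ⟨a1, a2⟩ | ⟨a1, a2⟩ <;>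
  rcases h2 with ⟨b1, b2⟩ | ⟨b1, b2⟩ <;>
  rcases h3 with ⟨c1, c2⟩ | ⟨c1, c2⟩ <;>
  rcases h4 with ⟨d1, d2⟩ | ⟨d1, d2⟩ <;>
  first
  | exact Or.inl ⟨by linarith, by linarith⟩
  | exact Or.inr ⟨by linarith, by linarith⟩

lemma pendant_nonneg (X : Finset (ℝ × ℝ)) (x : ℝ × ℝ) : 0 ≤ pendant X x := by
  apply Real.sInf_nonneg
  rintro g ⟨u, -, v, -, -, -, -, rfl⟩
  exact gromov_nonneg x u v

lemma pendant_le_s9 {X : Finset (ℝ × ℝ)} {x z w : ℝ × ℝ} (hz : z ∈ X) (hw : w ∈ X)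
    (hzx : z ≠ x) (hwx : w ≠ x) (hzw : z ≠ w) : pendant X x ≤ gromov x z w := by
  apply csInf_le
  · exact ⟨0, by rintro g ⟨u, -, v, -, -, -, -, rfl⟩; exact gromov_nonneg x u v⟩
  · exact ⟨z, hz, w, hw, hzx, hwx, hzw, rfl⟩

/-- The metric center associated with `x` lies between `x` and every other point of `X`. -/
lemma betweenB (X : Finset (ℝ × ℝ)) (x b c m z : ℝ × ℝ) (hb : b ∈ X) (hc : c ∈ X)
    (hbx : b ≠ x) (hcx : c ≠ x) (hbc : b ≠ c) (hg : gromov x b c = pendant X x)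
    (hcen : IsMetricCenter x b c m) (hz : z ∈ X) (hzx : z ≠ x) :
    d1 x z = d1 x m + d1 m z := by
  by_cases hzb : z = b
  · subst hzb; exact hcen.1
  by_cases hzc : z = c
  · subst hzc; exact hcen.2.1
  obtain ⟨h1, h2, h3⟩ := hcen
  obtain ⟨bx1, bx2⟩ := btw_coords h1
  obtain ⟨cx1, cx2⟩ := btw_coords h2
  obtain ⟨bc1, bc2⟩ := btw_coords h3
  have t1 : |x.1 - z.1| ≤ |x.1 - m.1| + |m.1 - z.1| := abs_sub_le _ _ _
  have t2 : |x.2 - z.2| ≤ |x.2 - m.2| + |m.2 - z.2| := abs_sub_le _ _ _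
  have pb : pendant X x ≤ gromov x z b := pendant_le_s9 hz hb hzx hbx hzb
  have pc : pendant X x ≤ gromov x z c := pendant_le_s9 hz hc hzx hcx hzc
  have gs_zb := gromov_split_s9 x z b
  have gs_zc := gromov_split_s9 x z c
  have gs_bc := gromov_split_s9 x b c
  have hf1 : |x.1 - m.1| + |m.1 - z.1| - |x.1 - z.1| ≤ 0 := by
    by_contra hpos
    push_neg at hpos
    have hflt : |x.1 - z.1| < |x.1 - m.1| + |m.1 - z.1| := by linarith
    have e1b := keyE1 bx1 cx1 bc1 hflt
    have e1c := keyE1 cx1 bx1 (btw_symm bc1) hflt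
    have hdc : mdel x.1 c.1 b.1 = mdel x.1 b.1 c.1 := del_comm _ _ _
    rcases keyE2 x.2 z.2 b.2 c.2 with h | h
    · linarith
    · linarith
  have hf2 : |x.2 - m.2| + |m.2 - z.2| - |x.2 - z.2| ≤ 0 := by
    by_contra hpos
    push_neg at hpos
    have hflt : |x.2 - z.2| < |x.2 - m.2| + |m.2 - z.2| := by linarith
    have e1b := keyE1 bx2 cx2 bc2 hflt
    have e1c := keyE1 cx2 bx2 (btw_symm bc2) hflt
    have hdc : mdel x.2 c.2 b.2 = mdel x.2 b.2 c.2 := del_comm _ _ _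
    rcases keyE2 x.1 z.1 b.1 c.1 with h | h
    · linarith
    · linarith
  simp only [d1]
  linarith


/-- If `x ℜ y` in the trimming relation (i.e. `d₁(x,y) = d̲(x) + d̲(y)`), then the metric
centers associated with `x` and `y` coincide. -/
theorem centers_eq_of_trimming_related (X : Finset (ℝ × ℝ)) (hcard : 3 ≤ X.card)
    (x y : ℝ × ℝ) (hx : x ∈ X) (hy : y ∈ X)
    (hrel : d1 x y = pendant X x + pendant X y)
    (mx my : ℝ × ℝ) (hmx : IsCenterOf X x mx) (hmy : IsCenterOf X y my) :
    mx = my := by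
  obtain ⟨b, hb, c, hc, hbx, hcx, hbc, hgb, hcenx⟩ := hmx
  obtain ⟨b', hb', c', hc', hby', hcy', hbc', hgb', hceny⟩ := hmy
  have hdxmx : d1 x mx = pendant X x := by rw [← hgb]; exact center_dist hcenx
  have hdymy : d1 y my = pendant X y := by rw [← hgb']; exact center_dist hceny
  have hp0 := pendant_nonneg X x
  have hq0 := pendant_nonneg X y
  by_cases hxy : x = y
  · subst hxy
    have h0 : d1 x x = 0 := by simp [d1]
    have hpz : pendant X x = 0 := by linarith
    have e1 : x = mx := eq_of_d1_zero (by linarith)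
    have e2 : x = my := eq_of_d1_zero (by linarith)
    exact e1.symm.trans e2
  · -- x ≠ y
    have hyx : y ≠ x := fun h => hxy h.symm
    set z₀ := if b = y then c else b with hz₀def
    have hz₀X : z₀ ∈ X := by rw [hz₀def]; split <;> assumption
    have hz₀y : z₀ ≠ y := by
      rw [hz₀def]; split
      · rename_i hby; exact fun h => hbc (hby.trans h.symm)
      · assumption
    have hz₀btw : d1 x z₀ = d1 x mx + d1 mx z₀ := by
      rw [hz₀def]; split
      · exact hcenx.2.1
      · exact hcenx.1
    have B1 : d1 x y = d1 x mx + d1 mx y :=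
      betweenB X x b c mx y hb hc hbx hcx hbc hgb hcenx hy hyx
    have B2 : d1 y x = d1 y my + d1 my x :=
      betweenB X y b' c' my x hb' hc' hby' hcy' hbc' hgb' hceny hx hxy
    have B3 : d1 y z₀ = d1 y my + d1 my z₀ :=
      betweenB X y b' c' my z₀ hb' hc' hby' hcy' hbc' hgb' hceny hz₀X hz₀y
    obtain ⟨c1a, c2a⟩ := btw_coords B1
    obtain ⟨c1b, c2b⟩ := btw_coords B2
    obtain ⟨c1c, c2c⟩ := btw_coords hz₀btw
    obtain ⟨c1d, c2d⟩ := btw_coords B3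
    have F1 : MBtw x.1 mx.1 my.1 := keyF c1a (btw_symm c1b) c1c c1d
    have F2 : MBtw x.2 mx.2 my.2 := keyF c2a (btw_symm c2b) c2c c2d
    have habs1 := abs_of_btw F1
    have habs2 := abs_of_btw F2
    have hsum : d1 x my = d1 x mx + d1 mx my := by
      simp only [d1]; linarith
    have hc1 : d1 y x = d1 x y := d1_comm y x
    have hc2 : d1 my x = d1 x my := d1_comm my x
    have hzero : d1 mx my = 0 := by linarith
    exact eq_of_d1_zero hzero
end

section
/- Let X ⊂ ℝ²₁ be a finite subspace with n = |X| ≥ 3, let S_X be its secondary rectangle, and let a ∈ X with associated metric center m_a. Then m_a ∈ S_X, and m_a is the unique point of S_X nearest to a with respect to d₁: for every p ∈ S_X one has d₁(a, m_a) ≤ d₁(a, p), with equality only for p = m_a. In particular, if a ∈ S_X then m_a = a. -/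
/-- The abscissas of the points of `X`, sorted in increasing order (with multiplicity). -/
noncomputable def sortedFst (X : Finset (ℝ × ℝ)) : List ℝ :=
  Multiset.sort (X.1.map Prod.fst) (· ≤ ·)

/-- The ordinates of the points of `X`, sorted in increasing order (with multiplicity). -/
noncomputable def sortedSnd (X : Finset (ℝ × ℝ)) : List ℝ :=
  Multiset.sort (X.1.map Prod.snd) (· ≤ ·)

/-- The secondary rectangle `S_X = [x₂, x_{n−1}] × [y₂, y_{n−1}]` of the finite subspace
`X` (with the abscissas and ordinates of `X` ordered with multiplicity). -/
noncomputable def secondaryRect (X : Finset (ℝ × ℝ)) : Set (ℝ × ℝ) :=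
  Set.Icc ((sortedFst X)[1]!) ((sortedFst X)[X.card - 2]!) ×ˢ
    Set.Icc ((sortedSnd X)[1]!) ((sortedSnd X)[X.card - 2]!)

/-! ### Auxiliary one-dimensional lemmas -/

lemma g_nonneg' (p b c : ℝ) : 0 ≤ (|p-b|+|p-c|-|b-c|)/2 := by
  have := abs_sub_le b p c
  have h1 : |b - p| = |p - b| := abs_sub_comm b p
  linarith

lemma g_ge_min' (p b c : ℝ) : min b c - p ≤ (|p-b|+|p-c|-|b-c|)/2 := by
  have h1 : b - p ≤ |p - b| := by rw [abs_sub_comm]; exact le_abs_self _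
  have h2 : c - p ≤ |p - c| := by rw [abs_sub_comm]; exact le_abs_self _
  rcases le_total b c with h|h
  · rw [min_eq_left h, abs_of_nonpos (by linarith : b - c ≤ 0)]; linarith
  · rw [min_eq_right h, abs_of_nonneg (by linarith : (0:ℝ) ≤ b - c)]; linarith

lemma g_ge_max' (p b c : ℝ) : p - max b c ≤ (|p-b|+|p-c|-|b-c|)/2 := by
  have h1 : p - b ≤ |p - b| := le_abs_self _
  have h2 : p - c ≤ |p - c| := le_abs_self _
  rcases le_total b c with h|h
  · rw [max_eq_right h, abs_of_nonpos (by linarith : b - c ≤ 0)]; linarith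
  · rw [max_eq_left h, abs_of_nonneg (by linarith : (0:ℝ) ≤ b - c)]; linarith

lemma g_le' (p q b c : ℝ) (h1 : min b c ≤ q) (h2 : q ≤ max b c) :
    (|p-b|+|p-c|-|b-c|)/2 ≤ |p - q| := by
  have t1 := abs_sub_le p q b
  have t2 := abs_sub_le p q c
  rcases le_total b c with h|h
  · rw [min_eq_left h] at h1; rw [max_eq_right h] at h2
    rw [abs_of_nonpos (by linarith : b - c ≤ 0)]
    rw [abs_of_nonneg (by linarith : (0:ℝ) ≤ q - b)] at t1
    rw [abs_of_nonpos (by linarith : q - c ≤ 0)] at t2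
    linarith
  · rw [min_eq_right h] at h1; rw [max_eq_left h] at h2
    rw [abs_of_nonneg (by linarith : (0:ℝ) ≤ b - c)]
    rw [abs_of_nonpos (by linarith : q - b ≤ 0)] at t1
    rw [abs_of_nonneg (by linarith : (0:ℝ) ≤ q - c)] at t2
    linarith

lemma between_of_abs_eq' {x y z : ℝ} (h : |x - z| = |x - y| + |y - z|) :
    min x z ≤ y ∧ y ≤ max x z := by
  have a1 : x - y ≤ |x - y| := le_abs_self _
  have a2 : y - x ≤ |x - y| := by rw [abs_sub_comm]; exact le_abs_self _
  have a3 : y - z ≤ |y - z| := le_abs_self _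
  have a4 : z - y ≤ |y - z| := by rw [abs_sub_comm]; exact le_abs_self _
  rcases le_total x z with hxz|hxz
  · rw [min_eq_left hxz, max_eq_right hxz]
    rw [abs_of_nonpos (by linarith : x - z ≤ 0)] at h
    constructor <;> linarith
  · rw [min_eq_right hxz, max_eq_left hxz]
    rw [abs_of_nonneg (by linarith : (0:ℝ) ≤ x - z)] at h
    constructor <;> linarith

/-! ### Clamp lemmas -/

lemma clamp_mem' {lo hi : ℝ} (t : ℝ) (h : lo ≤ hi) :
    lo ≤ max lo (min t hi) ∧ max lo (min t hi) ≤ hi :=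
  ⟨le_max_left _ _, max_le h (min_le_right _ _)⟩

lemma clamp_of_le' {lo hi t : ℝ} (h : lo ≤ hi) (ht : t ≤ lo) : max lo (min t hi) = lo := by
  rw [min_eq_left (ht.trans h), max_eq_left ht]

lemma clamp_of_mem' {lo hi t : ℝ} (h1 : lo ≤ t) (h2 : t ≤ hi) : max lo (min t hi) = t := by
  rw [min_eq_left h2, max_eq_right h1]

lemma clamp_of_ge' {lo hi t : ℝ} (h : lo ≤ hi) (ht : hi ≤ t) : max lo (min t hi) = hi := by
  rw [min_eq_right ht, max_eq_right h]

lemma coord_lb' {lo hi t u v : ℝ} (hlohi : lo ≤ hi)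
    (hlt : t < lo → lo ≤ u ∧ lo ≤ v) (hgt : hi < t → u ≤ hi ∧ v ≤ hi) :
    |t - max lo (min t hi)| ≤ (|t-u|+|t-v|-|u-v|)/2 := by
  by_cases h1 : t < lo
  · obtain ⟨hu, hv⟩ := hlt h1
    rw [clamp_of_le' hlohi h1.le, abs_of_nonpos (by linarith : t - lo ≤ 0)]
    have : lo ≤ min u v := le_min hu hv
    linarith [g_ge_min' t u v]
  · by_cases h2 : hi < t
    · obtain ⟨hu, hv⟩ := hgt h2
      rw [clamp_of_ge' hlohi h2.le, abs_of_nonneg (by linarith : (0:ℝ) ≤ t - hi)]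
      have : max u v ≤ hi := max_le hu hv
      linarith [g_ge_max' t u v]
    · rw [clamp_of_mem' (by linarith) (by linarith), sub_self, abs_zero]
      exact g_nonneg' t u v

lemma coord_pin' {lo hi t u v m : ℝ} (hlohi : lo ≤ hi)
    (hlt : t < lo → lo ≤ u ∧ lo ≤ v) (hgt : hi < t → u ≤ hi ∧ v ≤ hi)
    (habs : |t - m| = |t - max lo (min t hi)|)
    (hb1 : min u v ≤ m) (hb2 : m ≤ max u v) :
    m = max lo (min t hi) := by
  by_cases h1 : t < lo
  · obtain ⟨hu, hv⟩ := hlt h1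
    rw [clamp_of_le' hlohi h1.le] at habs ⊢
    rw [abs_of_nonpos (by linarith : t - lo ≤ 0)] at habs
    have hm : lo ≤ m := le_trans (le_min hu hv) hb1
    rw [abs_of_nonpos (by linarith : t - m ≤ 0)] at habs
    linarith
  · by_cases h2 : hi < t
    · obtain ⟨hu, hv⟩ := hgt h2
      rw [clamp_of_ge' hlohi h2.le] at habs ⊢
      rw [abs_of_nonneg (by linarith : (0:ℝ) ≤ t - hi)] at habs
      have hm : m ≤ hi := le_trans hb2 (max_le hu hv)
      rw [abs_of_nonneg (by linarith : (0:ℝ) ≤ t - m)] at habs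
      linarith
    · rw [clamp_of_mem' (by linarith) (by linarith)] at habs ⊢
      rw [sub_self, abs_zero, abs_eq_zero, sub_eq_zero] at habs
      exact habs.symm

lemma clamp_nearest' {lo hi t q : ℝ} (hlohi : lo ≤ hi) (h1 : lo ≤ q) (h2 : q ≤ hi) :
    |t - max lo (min t hi)| ≤ |t - q| ∧
      (|t - max lo (min t hi)| = |t - q| → q = max lo (min t hi)) := by
  by_cases ha : t < lo
  · rw [clamp_of_le' hlohi ha.le, abs_of_nonpos (by linarith : t - lo ≤ 0),
      abs_of_nonpos (by linarith : t - q ≤ 0)]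
    exact ⟨by linarith, fun h => by linarith⟩
  · by_cases hb : hi < t
    · rw [clamp_of_ge' hlohi hb.le, abs_of_nonneg (by linarith : (0:ℝ) ≤ t - hi),
        abs_of_nonneg (by linarith : (0:ℝ) ≤ t - q)]
      exact ⟨by linarith, fun h => by linarith⟩
    · rw [clamp_of_mem' (by linarith) (by linarith), sub_self, abs_zero]
      refine ⟨abs_nonneg _, fun h => ?_⟩
      have := sub_eq_zero.1 (abs_eq_zero.1 h.symm)
      linarith

/-! ### Sorted-list counting lemmas -/

lemma sorted_mono' {l : List ℝ} (hs : l.Pairwise (· ≤ ·)) {i j : ℕ} (hij : i ≤ j)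
    (hj : j < l.length) : l[i]'(lt_of_le_of_lt hij hj) ≤ l[j] := by
  rcases eq_or_lt_of_le hij with rfl|hij
  · exact le_refl _
  · exact List.pairwise_iff_getElem.1 hs i j _ hj hij

lemma count_lt_second' {l : List ℝ} (hs : l.Pairwise (· ≤ ·)) (h : 1 < l.length) {v : ℝ}
    (hv : l[1] = v) : l.countP (fun x => decide (x < v)) ≤ 1 := by
  rw [show l = l.take 1 ++ l.drop 1 from (List.take_append_drop 1 l).symm, List.countP_append]
  have hd : (l.drop 1).countP (fun x => decide (x < v)) = 0 := by
    rw [List.countP_eq_zero]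
    intro x hx
    rw [List.mem_iff_getElem] at hx
    obtain ⟨j, hj, rfl⟩ := hx
    rw [List.getElem_drop]
    simp only [decide_eq_true_eq, not_lt, ← hv]
    exact sorted_mono' hs (by omega) (by rw [List.length_drop] at hj; omega)
  have ht : (l.take 1).countP (fun x => decide (x < v)) ≤ 1 := by
    calc _ ≤ (l.take 1).length := List.countP_le_length
    _ ≤ 1 := by rw [List.length_take]; omega
  omega

lemma count_gt_second_last' {l : List ℝ} (hs : l.Pairwise (· ≤ ·)) {i : ℕ}
    (hi : i + 2 = l.length) {v : ℝ} (hv : l[i]'(by omega) = v) :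
    l.countP (fun x => decide (v < x)) ≤ 1 := by
  rw [show l = l.take (l.length - 1) ++ l.drop (l.length - 1) from
    (List.take_append_drop _ l).symm, List.countP_append]
  have hd : (l.drop (l.length - 1)).countP (fun x => decide (v < x)) ≤ 1 := by
    calc _ ≤ (l.drop (l.length - 1)).length := List.countP_le_length
    _ ≤ 1 := by rw [List.length_drop]; omega
  have ht : (l.take (l.length - 1)).countP (fun x => decide (v < x)) = 0 := by
    rw [List.countP_eq_zero]
    intro x hx
    rw [List.mem_iff_getElem] at hx
    obtain ⟨j, hj, rfl⟩ := hx
    rw [List.getElem_take]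
    simp only [decide_eq_true_eq, not_lt, ← hv]
    have hj' : j < l.length - 1 := by simpa using hj
    exact sorted_mono' hs (by omega) (by omega)
  omega

lemma count_le_second' {l : List ℝ} (hs : l.Pairwise (· ≤ ·)) (h : 1 < l.length) {v : ℝ}
    (hv : l[1] = v) : 2 ≤ l.countP (fun x => decide (x ≤ v)) := by
  rw [show l = l.take 2 ++ l.drop 2 from (List.take_append_drop 2 l).symm, List.countP_append]
  have ht : (l.take 2).countP (fun x => decide (x ≤ v)) = (l.take 2).length := by
    rw [List.countP_eq_length]
    intro x hx
    rw [List.mem_iff_getElem] at hx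
    obtain ⟨j, hj, rfl⟩ := hx
    rw [List.getElem_take]
    simp only [decide_eq_true_eq, ← hv]
    have hj' : j < 2 := by rw [List.length_take] at hj; omega
    exact sorted_mono' hs (by omega) h
  have h2 : (l.take 2).length = 2 := by rw [List.length_take]; omega
  omega

lemma count_ge_second_last' {l : List ℝ} (hs : l.Pairwise (· ≤ ·)) {i : ℕ}
    (hi : i + 2 = l.length) {v : ℝ} (hv : l[i]'(by omega) = v) :
    2 ≤ l.countP (fun x => decide (v ≤ x)) := by
  rw [show l = l.take i ++ l.drop i from (List.take_append_drop _ l).symm, List.countP_append]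
  have hd : (l.drop i).countP (fun x => decide (v ≤ x)) = (l.drop i).length := by
    rw [List.countP_eq_length]
    intro x hx
    rw [List.mem_iff_getElem] at hx
    obtain ⟨j, hj, rfl⟩ := hx
    rw [List.getElem_drop]
    simp only [decide_eq_true_eq, ← hv]
    exact sorted_mono' hs (by omega) (by rw [List.length_drop] at hj; omega)
  have h2 : (l.drop i).length = 2 := by rw [List.length_drop]; omega
  omega

/-! ### Finset-multiset bridging lemmas -/

lemma countP_list_eq' (f : ℝ × ℝ → ℝ) (p : ℝ → Prop) [DecidablePred p] (X : Finset (ℝ × ℝ)) :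
    (Multiset.sort (X.1.map f) (· ≤ ·)).countP (fun x => decide (p x)) =
      Multiset.countP p (X.1.map f) := by
  rw [← Multiset.sort_eq (α := ℝ) (X.1.map f) (· ≤ ·), Multiset.coe_countP]
  simp

lemma length_sort_eq' (f : ℝ × ℝ → ℝ) (X : Finset (ℝ × ℝ)) :
    (Multiset.sort (X.1.map f) (· ≤ ·)).length = X.card := by
  rw [Multiset.length_sort, Multiset.card_map]; rfl

lemma countP_two' {X : Finset (ℝ × ℝ)} {f : ℝ × ℝ → ℝ} {p q : ℝ × ℝ} (hp : p ∈ X) (hq : q ∈ X)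
    (hpq : p ≠ q) (pr : ℝ → Prop) [DecidablePred pr] (h1 : pr (f p)) (h2 : pr (f q)) :
    2 ≤ Multiset.countP pr (X.1.map f) := by
  have e1 : X.1 = p ::ₘ X.1.erase p := (Multiset.cons_erase hp).symm
  have hq' : q ∈ X.1.erase p := (Multiset.mem_erase_of_ne hpq.symm).2 hq
  have e2 : X.1.erase p = q ::ₘ (X.1.erase p).erase q := (Multiset.cons_erase hq').symm
  rw [e1, e2, Multiset.map_cons, Multiset.map_cons, Multiset.countP_cons,
    Multiset.countP_cons, if_pos h1, if_pos h2]
  omega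

lemma exists_other' {X : Finset (ℝ × ℝ)} {f : ℝ × ℝ → ℝ} {a : ℝ × ℝ} (ha : a ∈ X)
    (pr : ℝ → Prop) [DecidablePred pr] (h2 : 2 ≤ Multiset.countP pr (X.1.map f)) :
    ∃ y ∈ X, y ≠ a ∧ pr (f y) := by
  have e1 : X.1 = a ::ₘ X.1.erase a := (Multiset.cons_erase ha).symm
  rw [e1, Multiset.map_cons, Multiset.countP_cons] at h2
  have hpos : 0 < Multiset.countP pr ((X.1.erase a).map f) := by
    split_ifs at h2 <;> omega
  obtain ⟨u, hu, hup⟩ := Multiset.countP_pos.1 hpos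
  obtain ⟨y, hy, rfl⟩ := Multiset.mem_map.1 hu
  refine ⟨y, Multiset.mem_of_mem_erase hy, fun hya => ?_, hup⟩
  exact Multiset.Nodup.notMem_erase X.2 (hya ▸ hy)

/-! ### The combinatorial pair-selection lemma -/

lemma exists_pair' (Y : Finset (ℝ × ℝ)) (h2 : 2 ≤ Y.card) (P : ℝ × ℝ)
    (hl : ∃ y ∈ Y, y.1 ≤ P.1) (hr : ∃ y ∈ Y, P.1 ≤ y.1)
    (hd : ∃ y ∈ Y, y.2 ≤ P.2) (hu : ∃ y ∈ Y, P.2 ≤ y.2) :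
    ∃ b ∈ Y, ∃ c ∈ Y, b ≠ c ∧ min b.1 c.1 ≤ P.1 ∧ P.1 ≤ max b.1 c.1 ∧
      min b.2 c.2 ≤ P.2 ∧ P.2 ≤ max b.2 c.2 := by
  by_cases hP : P ∈ Y
  · obtain ⟨u, hu', v, hv', huv⟩ := Finset.one_lt_card.1 (by omega : 1 < Y.card)
    rcases eq_or_ne u P with rfl|hne
    · exact ⟨u, hu', v, hv', huv, min_le_left _ _, le_max_left _ _,
        min_le_left _ _, le_max_left _ _⟩
    · exact ⟨P, hP, u, hu', fun h => hne h.symm, min_le_left _ _, le_max_left _ _,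
        min_le_left _ _, le_max_left _ _⟩
  · by_cases hA : ∃ y ∈ Y, y.1 ≤ P.1 ∧ y.2 ≤ P.2
    · by_cases hB : ∃ y ∈ Y, P.1 ≤ y.1 ∧ P.2 ≤ y.2
      · obtain ⟨b, hb, hb1, hb2⟩ := hA
        obtain ⟨c, hc, hc1, hc2⟩ := hB
        have hbc : b ≠ c := by
          rintro rfl
          exact hP (by rwa [show b = P from
            Prod.ext (le_antisymm hb1 hc1) (le_antisymm hb2 hc2)] at hb)
        exact ⟨b, hb, c, hc, hbc, by simp [min_le_iff]; tauto,
          by simp [le_max_iff]; tauto, by simp [min_le_iff]; tauto, by simp [le_max_iff]; tauto⟩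
      · push_neg at hB
        by_cases hC : ∃ y ∈ Y, y.1 ≤ P.1 ∧ P.2 ≤ y.2
        · by_cases hD : ∃ y ∈ Y, P.1 ≤ y.1 ∧ y.2 ≤ P.2
          · obtain ⟨b, hb, hb1, hb2⟩ := hC
            obtain ⟨c, hc, hc1, hc2⟩ := hD
            have hbc : b ≠ c := by
              rintro rfl
              exact hP (by rwa [show b = P from
                Prod.ext (le_antisymm hb1 hc1) (le_antisymm hc2 hb2)] at hb)
            exact ⟨b, hb, c, hc, hbc, by simp [min_le_iff]; tauto, by simp [le_max_iff]; tauto,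
              by simp [min_le_iff]; tauto, by simp [le_max_iff]; tauto⟩
          · push_neg at hD
            obtain ⟨y, hy, hy1⟩ := hr
            rcases le_total y.2 P.2 with h|h
            · exact absurd (hD y hy hy1) (by simpa using h)
            · exact absurd (hB y hy hy1) (by simpa using h)
        · push_neg at hC
          obtain ⟨y, hy, hy2⟩ := hu
          rcases le_total y.1 P.1 with h|h
          · exact absurd (hC y hy h) (by simpa using hy2)
          · exact absurd (hB y hy h) (by simpa using hy2)
    · push_neg at hA
      by_cases hC : ∃ y ∈ Y, y.1 ≤ P.1 ∧ P.2 ≤ y.2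
      · by_cases hD : ∃ y ∈ Y, P.1 ≤ y.1 ∧ y.2 ≤ P.2
        · obtain ⟨b, hb, hb1, hb2⟩ := hC
          obtain ⟨c, hc, hc1, hc2⟩ := hD
          have hbc : b ≠ c := by
            rintro rfl
            exact hP (by rwa [show b = P from
              Prod.ext (le_antisymm hb1 hc1) (le_antisymm hc2 hb2)] at hb)
          exact ⟨b, hb, c, hc, hbc, by simp [min_le_iff]; tauto, by simp [le_max_iff]; tauto,
            by simp [min_le_iff]; tauto, by simp [le_max_iff]; tauto⟩
        · push_neg at hD
          obtain ⟨y, hy, hy2⟩ := hd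
          rcases le_total y.1 P.1 with h|h
          · exact absurd (hA y hy h) (by simpa using hy2)
          · exact absurd (hD y hy h) (by simpa using hy2)
      · push_neg at hC
        obtain ⟨y, hy, hy1⟩ := hl
        rcases le_total y.2 P.2 with h|h
        · exact absurd (hA y hy hy1) (by simpa using h)
        · exact absurd (hC y hy hy1) (by simpa using h)

lemma d1_coord {a b m : ℝ × ℝ} (h : d1 a b = d1 a m + d1 m b) :
    |a.1 - b.1| = |a.1 - m.1| + |m.1 - b.1| ∧ |a.2 - b.2| = |a.2 - m.2| + |m.2 - b.2| := by
  have t1 := abs_sub_le a.1 m.1 b.1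
  have t2 := abs_sub_le a.2 m.2 b.2
  rw [d1, d1, d1] at h
  constructor <;> linarith

/-- The metric center `m_a` associated with `a ∈ X` belongs to the secondary rectangle
`S_X` and is the unique point of `S_X` nearest to `a` for the Manhattan metric.
In particular, if `a ∈ S_X` then `m_a = a`. -/
theorem center_eq_nearest_point_of_secondary_rect (X : Finset (ℝ × ℝ))
    (hcard : 3 ≤ X.card) (a : ℝ × ℝ) (ha : a ∈ X)
    (ma : ℝ × ℝ) (hma : IsCenterOf X a ma) :
    ma ∈ secondaryRect X ∧
      (∀ p ∈ secondaryRect X, d1 a ma ≤ d1 a p ∧ (d1 a ma = d1 a p → p = ma)) ∧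
      (a ∈ secondaryRect X → ma = a) := by
  obtain ⟨b, hb, c, hc, hba, hca, hbc, hgp, hmc1, hmc2, hmc3⟩ := hma
  have hlx : sortedFst X = Multiset.sort (X.1.map Prod.fst) (· ≤ ·) := rfl
  have hly : sortedSnd X = Multiset.sort (X.1.map Prod.snd) (· ≤ ·) := rfl
  have hlenx : (sortedFst X).length = X.card := by rw [hlx]; exact length_sort_eq' Prod.fst X
  have hleny : (sortedSnd X).length = X.card := by rw [hly]; exact length_sort_eq' Prod.snd X
  have hsx : (sortedFst X).Pairwise (· ≤ ·) := by rw [hlx]; exact Multiset.pairwise_sort _ _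
  have hsy : (sortedSnd X).Pairwise (· ≤ ·) := by rw [hly]; exact Multiset.pairwise_sort _ _
  have h1x : 1 < (sortedFst X).length := by omega
  have h2x : X.card - 2 < (sortedFst X).length := by omega
  have h1y : 1 < (sortedSnd X).length := by omega
  have h2y : X.card - 2 < (sortedSnd X).length := by omega
  obtain ⟨x2, hx2⟩ : ∃ v, (sortedFst X)[1]'h1x = v := ⟨_, rfl⟩
  obtain ⟨xm, hxm⟩ : ∃ v, (sortedFst X)[X.card - 2]'h2x = v := ⟨_, rfl⟩
  obtain ⟨y2, hy2⟩ : ∃ v, (sortedSnd X)[1]'h1y = v := ⟨_, rfl⟩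
  obtain ⟨ym, hym⟩ : ∃ v, (sortedSnd X)[X.card - 2]'h2y = v := ⟨_, rfl⟩
  have hx2m : x2 ≤ xm := by rw [← hx2, ← hxm]; exact sorted_mono' hsx (by omega) h2x
  have hy2m : y2 ≤ ym := by rw [← hy2, ← hym]; exact sorted_mono' hsy (by omega) h2y
  have hrect : ∀ p : ℝ × ℝ, p ∈ secondaryRect X ↔
      (x2 ≤ p.1 ∧ p.1 ≤ xm) ∧ (y2 ≤ p.2 ∧ p.2 ≤ ym) := by
    intro p
    rw [secondaryRect, Set.mem_prod, Set.mem_Icc, Set.mem_Icc,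
      getElem!_pos (sortedFst X) 1 h1x, getElem!_pos (sortedFst X) (X.card - 2) h2x,
      getElem!_pos (sortedSnd X) 1 h1y, getElem!_pos (sortedSnd X) (X.card - 2) h2y,
      hx2, hxm, hy2, hym]
  -- point bounds
  have hltx : ∀ p ∈ X, p ≠ a → a.1 < x2 → x2 ≤ p.1 := by
    intro p hp hpa halt
    by_contra hcon
    push_neg at hcon
    have h2 : 2 ≤ Multiset.countP (fun x => x < x2) (X.1.map Prod.fst) :=
      countP_two' hp ha hpa (fun x => x < x2) hcon halt
    rw [← countP_list_eq', ← hlx] at h2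
    have := count_lt_second' hsx h1x hx2
    omega
  have hgtx : ∀ p ∈ X, p ≠ a → xm < a.1 → p.1 ≤ xm := by
    intro p hp hpa halt
    by_contra hcon
    push_neg at hcon
    have h2 : 2 ≤ Multiset.countP (fun x => xm < x) (X.1.map Prod.fst) :=
      countP_two' hp ha hpa (fun x => xm < x) hcon halt
    rw [← countP_list_eq', ← hlx] at h2
    have := count_gt_second_last' hsx (by omega : X.card - 2 + 2 = (sortedFst X).length) hxm
    omega
  have hlty : ∀ p ∈ X, p ≠ a → a.2 < y2 → y2 ≤ p.2 := by
    intro p hp hpa halt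
    by_contra hcon
    push_neg at hcon
    have h2 : 2 ≤ Multiset.countP (fun x => x < y2) (X.1.map Prod.snd) :=
      countP_two' hp ha hpa (fun x => x < y2) hcon halt
    rw [← countP_list_eq', ← hly] at h2
    have := count_lt_second' hsy h1y hy2
    omega
  have hgty : ∀ p ∈ X, p ≠ a → ym < a.2 → p.2 ≤ ym := by
    intro p hp hpa halt
    by_contra hcon
    push_neg at hcon
    have h2 : 2 ≤ Multiset.countP (fun x => ym < x) (X.1.map Prod.snd) :=
      countP_two' hp ha hpa (fun x => ym < x) hcon halt
    rw [← countP_list_eq', ← hly] at h2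
    have := count_gt_second_last' hsy (by omega : X.card - 2 + 2 = (sortedSnd X).length) hym
    omega
  -- existence of low/high points distinct from a
  have hex_le_x : ∃ y ∈ X, y ≠ a ∧ y.1 ≤ x2 := by
    refine exists_other' ha (fun v => v ≤ x2) ?_
    rw [← countP_list_eq', ← hlx]
    exact count_le_second' hsx h1x hx2
  have hex_ge_x : ∃ y ∈ X, y ≠ a ∧ xm ≤ y.1 := by
    refine exists_other' ha (fun v => xm ≤ v) ?_
    rw [← countP_list_eq', ← hlx]
    exact count_ge_second_last' hsx (by omega : X.card - 2 + 2 = (sortedFst X).length) hxm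
  have hex_le_y : ∃ y ∈ X, y ≠ a ∧ y.2 ≤ y2 := by
    refine exists_other' ha (fun v => v ≤ y2) ?_
    rw [← countP_list_eq', ← hly]
    exact count_le_second' hsy h1y hy2
  have hex_ge_y : ∃ y ∈ X, y ≠ a ∧ ym ≤ y.2 := by
    refine exists_other' ha (fun v => ym ≤ v) ?_
    rw [← countP_list_eq', ← hly]
    exact count_ge_second_last' hsy (by omega : X.card - 2 + 2 = (sortedSnd X).length) hym
  -- gromov expansion
  have hgr : ∀ y z : ℝ × ℝ, gromov a y z =
      (|a.1-y.1|+|a.1-z.1|-|y.1-z.1|)/2 + (|a.2-y.2|+|a.2-z.2|-|y.2-z.2|)/2 := by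
    intro y z; rw [gromov, d1, d1, d1]; ring
  -- per-pair lower bound
  have hpair_lbx : ∀ y ∈ X, y ≠ a → ∀ z ∈ X, z ≠ a →
      |a.1 - max x2 (min a.1 xm)| ≤ (|a.1-y.1|+|a.1-z.1|-|y.1-z.1|)/2 := by
    intro y hy hya z hz hza
    exact coord_lb' hx2m (fun h => ⟨hltx y hy hya h, hltx z hz hza h⟩)
      (fun h => ⟨hgtx y hy hya h, hgtx z hz hza h⟩)
  have hpair_lby : ∀ y ∈ X, y ≠ a → ∀ z ∈ X, z ≠ a →
      |a.2 - max y2 (min a.2 ym)| ≤ (|a.2-y.2|+|a.2-z.2|-|y.2-z.2|)/2 := by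
    intro y hy hya z hz hza
    exact coord_lb' hy2m (fun h => ⟨hlty y hy hya h, hlty z hz hza h⟩)
      (fun h => ⟨hgty y hy hya h, hgty z hz hza h⟩)
  have hSlb : ∀ g ∈ {g : ℝ | ∃ y ∈ X, ∃ z ∈ X, y ≠ a ∧ z ≠ a ∧ y ≠ z ∧ g = gromov a y z},
      |a.1 - max x2 (min a.1 xm)| + |a.2 - max y2 (min a.2 ym)| ≤ g := by
    rintro g ⟨y, hy, z, hz, hya, hza, hyz, rfl⟩
    rw [hgr]
    have := hpair_lbx y hy hya z hz hza
    have := hpair_lby y hy hya z hz hza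
    linarith
  have hSne : {g : ℝ | ∃ y ∈ X, ∃ z ∈ X, y ≠ a ∧ z ≠ a ∧ y ≠ z ∧ g = gromov a y z}.Nonempty :=
    ⟨gromov a b c, ⟨b, hb, c, hc, hba, hca, hbc, rfl⟩⟩
  -- achieving pair
  have hYcard : 2 ≤ (X.erase a).card := by
    rw [Finset.card_erase_of_mem ha]; omega
  obtain ⟨b', hb', c', hc', hbc', hminx, hmaxx, hminy, hmaxy⟩ :=
    exists_pair' (X.erase a) hYcard (max x2 (min a.1 xm), max y2 (min a.2 ym))
      (by obtain ⟨y, hy, hya, hyl⟩ := hex_le_x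
          exact ⟨y, Finset.mem_erase.2 ⟨hya, hy⟩, hyl.trans (le_max_left _ _)⟩)
      (by obtain ⟨y, hy, hya, hyl⟩ := hex_ge_x
          exact ⟨y, Finset.mem_erase.2 ⟨hya, hy⟩, le_trans (clamp_mem' a.1 hx2m).2 hyl⟩)
      (by obtain ⟨y, hy, hya, hyl⟩ := hex_le_y
          exact ⟨y, Finset.mem_erase.2 ⟨hya, hy⟩, hyl.trans (le_max_left _ _)⟩)
      (by obtain ⟨y, hy, hya, hyl⟩ := hex_ge_y
          exact ⟨y, Finset.mem_erase.2 ⟨hya, hy⟩, le_trans (clamp_mem' a.2 hy2m).2 hyl⟩)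
  have hb'X : b' ∈ X := Finset.mem_of_mem_erase hb'
  have hc'X : c' ∈ X := Finset.mem_of_mem_erase hc'
  have hb'a : b' ≠ a := (Finset.mem_erase.1 hb').1
  have hc'a : c' ≠ a := (Finset.mem_erase.1 hc').1
  have hach : gromov a b' c' ≤ |a.1 - max x2 (min a.1 xm)| + |a.2 - max y2 (min a.2 ym)| := by
    rw [hgr]
    have hx := g_le' a.1 (max x2 (min a.1 xm)) b'.1 c'.1 hminx hmaxx
    have hy := g_le' a.2 (max y2 (min a.2 ym)) b'.2 c'.2 hminy hmaxy
    linarith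
  -- pendant value
  have hpend : pendant X a = |a.1 - max x2 (min a.1 xm)| + |a.2 - max y2 (min a.2 ym)| := by
    rw [pendant]
    refine le_antisymm ?_ (le_csInf hSne hSlb)
    exact le_trans (csInf_le ⟨_, hSlb⟩ ⟨b', hb'X, c', hc'X, hb'a, hc'a, hbc', rfl⟩) hach
  have hg : gromov a b c = |a.1 - max x2 (min a.1 xm)| + |a.2 - max y2 (min a.2 ym)| :=
    hgp.trans hpend
  rw [hgr] at hg
  have hgx_ge := hpair_lbx b hb hba c hc hca
  have hgy_ge := hpair_lby b hb hba c hc hca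
  have hgx : (|a.1-b.1|+|a.1-c.1|-|b.1-c.1|)/2 = |a.1 - max x2 (min a.1 xm)| := by linarith
  have hgy : (|a.2-b.2|+|a.2-c.2|-|b.2-c.2|)/2 = |a.2 - max y2 (min a.2 ym)| := by linarith
  -- pin the center
  obtain ⟨e1x, e1y⟩ := d1_coord hmc1
  obtain ⟨e2x, e2y⟩ := d1_coord hmc2
  obtain ⟨e3x, e3y⟩ := d1_coord hmc3
  have habsx : |a.1 - ma.1| = |a.1 - max x2 (min a.1 xm)| := by
    have hc1 := abs_sub_comm b.1 ma.1
    linarith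
  have habsy : |a.2 - ma.2| = |a.2 - max y2 (min a.2 ym)| := by
    have hc1 := abs_sub_comm b.2 ma.2
    linarith
  obtain ⟨hbx1, hbx2⟩ := between_of_abs_eq' e3x
  obtain ⟨hby1, hby2⟩ := between_of_abs_eq' e3y
  have hmax : ma.1 = max x2 (min a.1 xm) :=
    coord_pin' hx2m (fun h => ⟨hltx b hb hba h, hltx c hc hca h⟩)
      (fun h => ⟨hgtx b hb hba h, hgtx c hc hca h⟩) habsx hbx1 hbx2
  have hmay : ma.2 = max y2 (min a.2 ym) :=
    coord_pin' hy2m (fun h => ⟨hlty b hb hba h, hlty c hc hca h⟩)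
      (fun h => ⟨hgty b hb hba h, hgty c hc hca h⟩) habsy hby1 hby2
  have hmaP : ma = (max x2 (min a.1 xm), max y2 (min a.2 ym)) := Prod.ext hmax hmay
  refine ⟨?_, ?_, ?_⟩
  · rw [hmaP]
    exact (hrect _).2 ⟨clamp_mem' a.1 hx2m, clamp_mem' a.2 hy2m⟩
  · intro p hp
    obtain ⟨⟨hp1, hp2⟩, hp3, hp4⟩ := (hrect p).1 hp
    have cx := clamp_nearest' (t := a.1) hx2m hp1 hp2
    have cy := clamp_nearest' (t := a.2) hy2m hp3 hp4
    rw [hmaP]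
    constructor
    · show |a.1 - max x2 (min a.1 xm)| + |a.2 - max y2 (min a.2 ym)| ≤ |a.1 - p.1| + |a.2 - p.2|
      exact add_le_add cx.1 cy.1
    · intro heq
      have heq' : |a.1 - max x2 (min a.1 xm)| + |a.2 - max y2 (min a.2 ym)| =
          |a.1 - p.1| + |a.2 - p.2| := heq
      have h1 : |a.1 - max x2 (min a.1 xm)| = |a.1 - p.1| := by
        have := cx.1
        have := cy.1
        linarith
      have h2 : |a.2 - max y2 (min a.2 ym)| = |a.2 - p.2| := by
        have := cx.1
        have := cy.1
        linarith
      exact Prod.ext (cx.2 h1) (cy.2 h2)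
  · intro haS
    obtain ⟨⟨ha1, ha2⟩, ha3, ha4⟩ := (hrect a).1 haS
    rw [hmaP]
    exact Prod.ext (clamp_of_mem' ha1 ha2) (clamp_of_mem' ha3 ha4)
end

section
/- Let X ⊂ ℝ²₁ be a finite subspace with n = |X| ≥ 3, with abscissas ordered with multiplicity as x₁ ≤ … ≤ xₙ and ordinates as y₁ ≤ … ≤ yₙ, and secondary rectangle S_X = [x₂, x_{n−1}] × [y₂, y_{n−1}]. Then for every a = (a₁,a₂) ∈ X, the metric center associated with a is given by coordinatewise clamping into S_X: m_a = (max(x₂, min(a₁, x_{n−1})), max(y₂, min(a₂, y_{n−1}))). -/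
/-! ### Auxiliary scalar lemmas -/

noncomputable def gsc (u v w : ℝ) : ℝ := (|u - v| + |u - w| - |v - w|) / 2

lemma gsc_aux (u v w : ℝ) (hvw : v ≤ w) :
    gsc u v w = max 0 (max (v - u) (u - w)) := by
  unfold gsc
  rcases le_total u v with h1 | h1
  · rw [abs_of_nonpos (by linarith : u - v ≤ 0), abs_of_nonpos (by linarith : u - w ≤ 0),
      abs_of_nonpos (by linarith : v - w ≤ 0),
      max_eq_left (by linarith : u - w ≤ v - u), max_eq_right (by linarith : (0:ℝ) ≤ v - u)]
    ring
  · rcases le_total u w with h2 | h2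
    · rw [abs_of_nonneg (by linarith : 0 ≤ u - v), abs_of_nonpos (by linarith : u - w ≤ 0),
        abs_of_nonpos (by linarith : v - w ≤ 0),
        max_eq_left (max_le (by linarith) (by linarith))]
      ring
    · rw [abs_of_nonneg (by linarith : 0 ≤ u - v), abs_of_nonneg (by linarith : 0 ≤ u - w),
        abs_of_nonpos (by linarith : v - w ≤ 0),
        max_eq_right (by linarith : v - u ≤ u - w), max_eq_right (by linarith : (0:ℝ) ≤ u - w)]
      ring

lemma gsc_comm (u v w : ℝ) : gsc u v w = gsc u w v := by
  unfold gsc; rw [abs_sub_comm v w]; ring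

lemma gsc_eq (u v w : ℝ) : gsc u v w = max 0 (max (min v w - u) (u - max v w)) := by
  rcases le_total v w with h | h
  · rw [min_eq_left h, max_eq_right h, gsc_aux u v w h]
  · rw [min_eq_right h, max_eq_left h, gsc_comm, gsc_aux u w v h]

lemma gsc_nonneg (u v w : ℝ) : 0 ≤ gsc u v w := by
  rw [gsc_eq]; exact le_max_left _ _

lemma gromov_split_s12 (a b c : ℝ × ℝ) :
    gromov a b c = gsc a.1 b.1 c.1 + gsc a.2 b.2 c.2 := by
  unfold gromov d1 gsc
  ring

lemma gromov_nonneg_s12 (a b c : ℝ × ℝ) : 0 ≤ gromov a b c := by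
  rw [gromov_split_s12]
  have := gsc_nonneg a.1 b.1 c.1
  have := gsc_nonneg a.2 b.2 c.2
  linarith

/-! ### Sorted list counting lemmas -/

lemma L1 (l : List ℝ) (hs : l.Pairwise (· ≤ ·)) (hn : 3 ≤ l.length) :
    l.countP (fun x => decide (x < l[1]!)) ≤ 1 := by
  rcases l with _ | ⟨a, _ | ⟨b, t⟩⟩ <;> simp at hn
  have h1 : (a :: b :: t)[1]! = b := by rw [getElem!_pos _ 1 (by simp [Nat.succ_le_succ])]; rfl
  rw [h1]
  obtain ⟨-, hs2⟩ := List.pairwise_cons.mp hs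
  have hb : ∀ x ∈ t, b ≤ x := fun x hx => List.rel_of_pairwise_cons hs2 hx
  have ht : t.countP (fun x => decide (x < b)) = 0 :=
    List.countP_eq_zero.2 (by intro x hx; simpa using not_lt.2 (hb x hx))
  simp only [List.countP_cons, ht, decide_eq_true_eq]
  rw [if_neg (lt_irrefl b)]
  split <;> simp

lemma L2 (l : List ℝ) (hs : l.Pairwise (· ≤ ·)) (hn : 3 ≤ l.length) (α : ℝ) (hα : l[1]! ≤ α) :
    2 ≤ l.countP (fun x => decide (x ≤ α)) := by
  rcases l with _ | ⟨a, _ | ⟨b, t⟩⟩ <;> simp at hn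
  have h1 : (a :: b :: t)[1]! = b := by rw [getElem!_pos _ 1 (by simp [Nat.succ_le_succ])]; rfl
  rw [h1] at hα
  obtain ⟨hab, hs2⟩ := List.pairwise_cons.mp hs
  have ha : a ≤ α := le_trans (hab b (by simp)) hα
  simp only [List.countP_cons]
  simp [ha, hα]

lemma L5 (l : List ℝ) (hs : l.Pairwise (· ≤ ·)) (hn : 3 ≤ l.length) :
    l[1]! ≤ l[l.length - 2]! := by
  rw [getElem!_pos _ 1 (by omega), getElem!_pos _ (l.length - 2) (by omega)]
  exact hs.rel_get_of_le (by simp; omega : (⟨1, by omega⟩ : Fin l.length) ≤ ⟨l.length - 2, by omega⟩)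

lemma L3 (l : List ℝ) (hs : l.Pairwise (· ≤ ·)) (hn : 3 ≤ l.length) :
    l.countP (fun x => decide (l[l.length - 2]! < x)) ≤ 1 := by
  have hrev : l.reverse.Pairwise (· ≥ ·) := List.pairwise_reverse.2 hs
  have hkey : l[l.length - 2]! = l.reverse[1]! := by
    rw [getElem!_pos _ (l.length - 2) (by omega),
      getElem!_pos _ 1 (by rw [List.length_reverse]; omega)]
    rw [List.getElem_reverse]
    congr 1
  rw [hkey, ← List.countP_reverse]
  generalize hr : l.reverse = r at *
  have hn' : 3 ≤ r.length := by rw [← hr]; simpa using hn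
  rcases r with _ | ⟨a, _ | ⟨b, t⟩⟩ <;> simp at hn'
  have h1 : (a :: b :: t)[1]! = b := by rw [getElem!_pos _ 1 (by simp [Nat.succ_le_succ])]; rfl
  rw [h1]
  obtain ⟨-, hp2⟩ := List.pairwise_cons.mp hrev
  obtain ⟨hb, -⟩ := List.pairwise_cons.mp hp2
  have ht : t.countP (fun x => decide (b < x)) = 0 :=
    List.countP_eq_zero.2 (by intro x hx; simpa using not_lt.2 (hb x hx))
  simp only [List.countP_cons, ht, decide_eq_true_eq]
  rw [if_neg (lt_irrefl b)]
  split <;> simp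

lemma L4 (l : List ℝ) (hs : l.Pairwise (· ≤ ·)) (hn : 3 ≤ l.length) (β : ℝ)
    (hβ : β ≤ l[l.length - 2]!) : 2 ≤ l.countP (fun x => decide (β ≤ x)) := by
  have hrev : l.reverse.Pairwise (· ≥ ·) := List.pairwise_reverse.2 hs
  have hkey : l[l.length - 2]! = l.reverse[1]! := by
    rw [getElem!_pos _ (l.length - 2) (by omega),
      getElem!_pos _ 1 (by rw [List.length_reverse]; omega)]
    rw [List.getElem_reverse]
    congr 1
  rw [hkey] at hβ
  rw [← List.countP_reverse]
  generalize hr : l.reverse = r at *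
  have hn' : 3 ≤ r.length := by rw [← hr]; simpa using hn
  rcases r with _ | ⟨a, _ | ⟨b, t⟩⟩ <;> simp at hn'
  have h1 : (a :: b :: t)[1]! = b := by rw [getElem!_pos _ 1 (by simp [Nat.succ_le_succ])]; rfl
  rw [h1] at hβ
  obtain ⟨hab, -⟩ := List.pairwise_cons.mp hrev
  have ha : β ≤ a := le_trans hβ (hab b (by simp))
  simp only [List.countP_cons]
  simp [ha, hβ]
/-! ### Finset-level counting lemmas -/

lemma sort_len (X : Finset (ℝ × ℝ)) (f : ℝ × ℝ → ℝ) :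
    (Multiset.sort (X.1.map f) (· ≤ ·)).length = X.card := by
  rw [Multiset.length_sort, Multiset.card_map]; rfl

lemma countP_sort (M : Multiset ℝ) (p : ℝ → Prop) [DecidablePred p] :
    M.countP p = (Multiset.sort M (· ≤ ·)).countP (fun z => decide (p z)) := by
  conv_lhs => rw [← Multiset.sort_eq M (· ≤ ·)]
  rw [Multiset.coe_countP]

lemma F_low (X : Finset (ℝ × ℝ)) (f : ℝ × ℝ → ℝ) (hn : 3 ≤ X.card)
    {a b : ℝ × ℝ} (ha : a ∈ X) (hb : b ∈ X) (hab : b ≠ a)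
    (h : f a < (Multiset.sort (X.1.map f) (· ≤ ·))[1]!) :
    (Multiset.sort (X.1.map f) (· ≤ ·))[1]! ≤ f b := by
  by_contra hc
  push_neg at hc
  obtain ⟨s1, hs1⟩ : ∃ s1, (Multiset.sort (X.1.map f) (· ≤ ·))[1]! = s1 := ⟨_, rfl⟩
  have hL := L1 (Multiset.sort (X.1.map f) (· ≤ ·)) (Multiset.pairwise_sort _ _)
    (by rw [sort_len]; exact hn)
  rw [hs1] at hL h hc
  have hcount : (X.1.map f).countP (fun z => z < s1) ≤ 1 := by
    rw [countP_sort]; exact hL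
  have hbe : b ∈ X.1.erase a := (Multiset.mem_erase_of_ne hab).2 hb
  have e1 : X.1 = a ::ₘ X.1.erase a := (Multiset.cons_erase ha).symm
  have e2 : X.1.erase a = b ::ₘ (X.1.erase a).erase b := (Multiset.cons_erase hbe).symm
  have hdec : X.1.map f = f a ::ₘ f b ::ₘ ((X.1.erase a).erase b).map f := by
    conv_lhs => rw [e1, e2]
    simp
  rw [hdec, Multiset.countP_cons, Multiset.countP_cons, if_pos h, if_pos hc] at hcount
  omega

lemma F_high (X : Finset (ℝ × ℝ)) (f : ℝ × ℝ → ℝ) (hn : 3 ≤ X.card)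
    {a b : ℝ × ℝ} (ha : a ∈ X) (hb : b ∈ X) (hab : b ≠ a)
    (h : (Multiset.sort (X.1.map f) (· ≤ ·))[X.card - 2]! < f a) :
    f b ≤ (Multiset.sort (X.1.map f) (· ≤ ·))[X.card - 2]! := by
  by_contra hc
  push_neg at hc
  obtain ⟨s2, hs2⟩ : ∃ s2, (Multiset.sort (X.1.map f) (· ≤ ·))[X.card - 2]! = s2 := ⟨_, rfl⟩
  have hL := L3 (Multiset.sort (X.1.map f) (· ≤ ·)) (Multiset.pairwise_sort _ _)
    (by rw [sort_len]; exact hn)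
  rw [sort_len] at hL
  rw [hs2] at hL h hc
  have hcount : (X.1.map f).countP (fun z => s2 < z) ≤ 1 := by
    rw [countP_sort]; exact hL
  have hbe : b ∈ X.1.erase a := (Multiset.mem_erase_of_ne hab).2 hb
  have e1 : X.1 = a ::ₘ X.1.erase a := (Multiset.cons_erase ha).symm
  have e2 : X.1.erase a = b ::ₘ (X.1.erase a).erase b := (Multiset.cons_erase hbe).symm
  have hdec : X.1.map f = f a ::ₘ f b ::ₘ ((X.1.erase a).erase b).map f := by
    conv_lhs => rw [e1, e2]
    simp
  rw [hdec, Multiset.countP_cons, Multiset.countP_cons, if_pos h, if_pos hc] at hcount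
  omega

lemma F_exlow (X : Finset (ℝ × ℝ)) (f : ℝ × ℝ → ℝ) (hn : 3 ≤ X.card)
    {a : ℝ × ℝ} (ha : a ∈ X) (α : ℝ)
    (hα : (Multiset.sort (X.1.map f) (· ≤ ·))[1]! ≤ α) :
    ∃ p ∈ X.erase a, f p ≤ α := by
  by_contra hc
  push_neg at hc
  have hcount : 2 ≤ (X.1.map f).countP (fun z => z ≤ α) := by
    conv_rhs => rw [← Multiset.sort_eq (X.1.map f) (· ≤ ·)]
    rw [Multiset.coe_countP]
    exact L2 _ (Multiset.pairwise_sort _ _) (by rw [sort_len]; exact hn) α hα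
  have hdec : X.1.map f = f a ::ₘ (X.erase a).1.map f := by
    conv_lhs => rw [(Multiset.cons_erase ha).symm]
    simp [Finset.erase_val]
  have hrest : ((X.erase a).1.map f).countP (fun z => z ≤ α) = 0 := by
    rw [Multiset.countP_eq_zero]
    intro z hz
    obtain ⟨p, hp, rfl⟩ := Multiset.mem_map.1 hz
    exact not_le.2 (hc p hp)
  rw [hdec, Multiset.countP_cons, hrest] at hcount
  split at hcount <;> omega

lemma F_exhigh (X : Finset (ℝ × ℝ)) (f : ℝ × ℝ → ℝ) (hn : 3 ≤ X.card)
    {a : ℝ × ℝ} (ha : a ∈ X) (β : ℝ)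
    (hβ : β ≤ (Multiset.sort (X.1.map f) (· ≤ ·))[X.card - 2]!) :
    ∃ p ∈ X.erase a, β ≤ f p := by
  by_contra hc
  push_neg at hc
  have hcount : 2 ≤ (X.1.map f).countP (fun z => β ≤ z) := by
    conv_rhs => rw [← Multiset.sort_eq (X.1.map f) (· ≤ ·)]
    rw [Multiset.coe_countP]
    have h4 := L4 (Multiset.sort (X.1.map f) (· ≤ ·)) (Multiset.pairwise_sort _ _)
      (by rw [sort_len]; exact hn) β (by rwa [sort_len])
    exact h4
  have hdec : X.1.map f = f a ::ₘ (X.erase a).1.map f := by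
    conv_lhs => rw [(Multiset.cons_erase ha).symm]
    simp [Finset.erase_val]
  have hrest : ((X.erase a).1.map f).countP (fun z => β ≤ z) = 0 := by
    rw [Multiset.countP_eq_zero]
    intro z hz
    obtain ⟨p, hp, rfl⟩ := Multiset.mem_map.1 hz
    exact not_le.2 (hc p hp)
  rw [hdec, Multiset.countP_cons, hrest] at hcount
  split at hcount <;> omega

lemma F_s1s2 (X : Finset (ℝ × ℝ)) (f : ℝ × ℝ → ℝ) (hn : 3 ≤ X.card) :
    (Multiset.sort (X.1.map f) (· ≤ ·))[1]! ≤
      (Multiset.sort (X.1.map f) (· ≤ ·))[X.card - 2]! := by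
  have := L5 (Multiset.sort (X.1.map f) (· ≤ ·)) (Multiset.pairwise_sort _ _)
    (by rw [sort_len]; exact hn)
  rwa [sort_len] at this
/-! ### Combinatorial pair selection -/

lemma pair_lemma {P : Type*} [DecidableEq P] (Y : Finset P) (hY : 2 ≤ Y.card)
    (A B C D : P → Prop)
    (hAB : ∀ p ∈ Y, A p ∨ B p) (hCD : ∀ p ∈ Y, C p ∨ D p)
    (hA : ∃ p ∈ Y, A p) (hB : ∃ p ∈ Y, B p) (hC : ∃ p ∈ Y, C p) (hD : ∃ p ∈ Y, D p) :
    ∃ b ∈ Y, ∃ c ∈ Y, b ≠ c ∧ (A b ∨ A c) ∧ (B b ∨ B c) ∧ (C b ∨ C c) ∧ (D b ∨ D c) := by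
  classical
  by_cases hab : ∃ p ∈ Y, A p ∧ B p
  · obtain ⟨p, hp, hpA, hpB⟩ := hab
    by_cases hpc : C p
    · by_cases hpd : D p
      · obtain ⟨c, hc, hne⟩ := Finset.exists_mem_ne (s := Y) (by omega) p
        exact ⟨p, hp, c, hc, hne.symm, by tauto, by tauto, by tauto, by tauto⟩
      · obtain ⟨q, hq, hqD⟩ := hD
        have hne : p ≠ q := fun h => hpd (h ▸ hqD)
        exact ⟨p, hp, q, hq, hne, by tauto, by tauto, by tauto, by tauto⟩
    · have hpd : D p := (hCD p hp).resolve_left hpc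
      obtain ⟨q, hq, hqC⟩ := hC
      have hne : p ≠ q := fun h => hpc (h ▸ hqC)
      exact ⟨p, hp, q, hq, hne, by tauto, by tauto, by tauto, by tauto⟩
  · by_cases hcd : ∃ p ∈ Y, C p ∧ D p
    · obtain ⟨p, hp, hpC, hpD⟩ := hcd
      by_cases hpa : A p
      · obtain ⟨q, hq, hqB⟩ := hB
        have hne : p ≠ q := fun h => hab ⟨p, hp, hpa, h ▸ hqB⟩
        exact ⟨p, hp, q, hq, hne, by tauto, by tauto, by tauto, by tauto⟩
      · have hpb : B p := (hAB p hp).resolve_left hpa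
        obtain ⟨q, hq, hqA⟩ := hA
        have hne : p ≠ q := fun h => hpa (h ▸ hqA)
        exact ⟨p, hp, q, hq, hne, by tauto, by tauto, by tauto, by tauto⟩
    · obtain ⟨p, hp, hpA⟩ := hA
      have hpB : ¬ B p := fun h => hab ⟨p, hp, hpA, h⟩
      by_cases hpc : C p
      · by_cases hbd : ∃ q ∈ Y, B q ∧ D q
        · obtain ⟨q, hq, hqB, hqD⟩ := hbd
          have hne : p ≠ q := fun h => hpB (h ▸ hqB)
          exact ⟨p, hp, q, hq, hne, by tauto, by tauto, by tauto, by tauto⟩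
        · obtain ⟨q, hq, hqB⟩ := hB
          have hqD : ¬ D q := fun h => hbd ⟨q, hq, hqB, h⟩
          have hqC : C q := (hCD q hq).resolve_right hqD
          obtain ⟨r, hr, hrD⟩ := hD
          have hrC : ¬ C r := fun h => hcd ⟨r, hr, h, hrD⟩
          have hrB : ¬ B r := fun h => hbd ⟨r, hr, h, hrD⟩
          have hrA : A r := (hAB r hr).resolve_right hrB
          have hne : q ≠ r := fun h => hrC (h ▸ hqC)
          exact ⟨q, hq, r, hr, hne, by tauto, by tauto, by tauto, by tauto⟩
      · have hpd : D p := (hCD p hp).resolve_left hpc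
        by_cases hbc : ∃ q ∈ Y, B q ∧ C q
        · obtain ⟨q, hq, hqB, hqC⟩ := hbc
          have hne : p ≠ q := fun h => hpB (h ▸ hqB)
          exact ⟨p, hp, q, hq, hne, by tauto, by tauto, by tauto, by tauto⟩
        · obtain ⟨q, hq, hqB⟩ := hB
          have hqC : ¬ C q := fun h => hbc ⟨q, hq, hqB, h⟩
          have hqD : D q := (hCD q hq).resolve_left hqC
          obtain ⟨r, hr, hrC⟩ := hC
          have hrD : ¬ D r := fun h => hcd ⟨r, hr, hrC, h⟩
          have hrB : ¬ B r := fun h => hbc ⟨r, hr, h, hrC⟩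
          have hrA : A r := (hAB r hr).resolve_right hrB
          exact ⟨q, hq, r, hr, fun h => hqC (h ▸ hrC), by tauto, by tauto, by tauto, by tauto⟩

lemma betw {u v m : ℝ} (h : |u - v| = |u - m| + |m - v|) : min u v ≤ m ∧ m ≤ max u v := by
  constructor
  · by_contra hc
    rw [not_le, lt_min_iff] at hc
    obtain ⟨h1, h2⟩ := hc
    rw [abs_of_pos (by linarith : (0:ℝ) < u - m), abs_of_neg (by linarith : m - v < 0)] at h
    rcases abs_cases (u - v) with ⟨e, _⟩ | ⟨e, _⟩ <;> rw [e] at h <;> linarith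
  · by_contra hc
    rw [not_le, max_lt_iff] at hc
    obtain ⟨h1, h2⟩ := hc
    rw [abs_of_neg (by linarith : u - m < 0), abs_of_pos (by linarith : (0:ℝ) < m - v)] at h
    rcases abs_cases (u - v) with ⟨e, _⟩ | ⟨e, _⟩ <;> rw [e] at h <;> linarith

/-! ### The one-dimensional main lemma -/

lemma coord_main (u v w m s1 s2 : ℝ) (hs : s1 ≤ s2)
    (hlow : u < s1 → s1 ≤ v ∧ s1 ≤ w)
    (hhigh : s2 < u → v ≤ s2 ∧ w ≤ s2)
    (heq : max 0 (max (min v w - u) (u - max v w)) = max 0 (max (s1 - u) (u - s2)))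
    (h1 : min u v ≤ m) (h1' : m ≤ max u v) (h2 : min u w ≤ m) (h2' : m ≤ max u w)
    (h3 : min v w ≤ m) (h3' : m ≤ max v w) :
    m = max s1 (min u s2) := by
  rcases lt_or_ge u s1 with hu | hu
  · obtain ⟨hv, hw⟩ := hlow hu
    have hmin : s1 ≤ min v w := le_min hv hw
    have hmm : min v w ≤ max v w := min_le_max
    have hL : max 0 (max (min v w - u) (u - max v w)) = min v w - u := by
      rw [max_eq_left (by linarith : u - max v w ≤ min v w - u),
        max_eq_right (by linarith : (0:ℝ) ≤ min v w - u)]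
    have hR : max 0 (max (s1 - u) (u - s2)) = s1 - u := by
      rw [max_eq_left (by linarith : u - s2 ≤ s1 - u),
        max_eq_right (by linarith : (0:ℝ) ≤ s1 - u)]
    have hvw : min v w = s1 := by rw [hL, hR] at heq; linarith
    have e1 : max u v = v := max_eq_right (by linarith)
    have e2 : max u w = w := max_eq_right (by linarith)
    rw [e1] at h1'
    rw [e2] at h2'
    have hle : m ≤ s1 := by
      have := le_min h1' h2'
      linarith [hvw ▸ this]
    have hge : s1 ≤ m := by rw [hvw] at h3; exact h3
    have hrhs : max s1 (min u s2) = s1 := by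
      rw [min_eq_left (by linarith), max_eq_left (by linarith)]
    rw [hrhs]
    linarith
  · rcases lt_or_ge s2 u with hu2 | hu2
    · obtain ⟨hv, hw⟩ := hhigh hu2
      have hmax : max v w ≤ s2 := max_le hv hw
      have hmm : min v w ≤ max v w := min_le_max
      have hL : max 0 (max (min v w - u) (u - max v w)) = u - max v w := by
        rw [max_eq_right (by linarith : min v w - u ≤ u - max v w),
          max_eq_right (by linarith : (0:ℝ) ≤ u - max v w)]
      have hR : max 0 (max (s1 - u) (u - s2)) = u - s2 := by
        rw [max_eq_right (by linarith : s1 - u ≤ u - s2),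
          max_eq_right (by linarith : (0:ℝ) ≤ u - s2)]
      have hvw : max v w = s2 := by rw [hL, hR] at heq; linarith
      have e1 : min u v = v := min_eq_right (by linarith)
      have e2 : min u w = w := min_eq_right (by linarith)
      rw [e1] at h1
      rw [e2] at h2
      have hge : s2 ≤ m := by
        have := max_le h1 h2
        have h' : max v w ≤ m := max_le h1 h2
        linarith [hvw ▸ h']
      have hle : m ≤ s2 := by rw [hvw] at h3'; exact h3'
      have hrhs : max s1 (min u s2) = s2 := by
        rw [min_eq_right (by linarith), max_eq_right (by linarith)]
      rw [hrhs]
      linarith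
    · have hR : max 0 (max (s1 - u) (u - s2)) = 0 := by
        rw [max_eq_left (max_le (by linarith) (by linarith))]
      rw [hR] at heq
      have hminle : min v w ≤ u := by
        by_contra hcon
        push_neg at hcon
        have h' : min v w - u ≤ max 0 (max (min v w - u) (u - max v w)) :=
          le_max_of_le_right (le_max_left _ _)
        rw [heq] at h'
        linarith
      have hmaxge : u ≤ max v w := by
        by_contra hcon
        push_neg at hcon
        have h' : u - max v w ≤ max 0 (max (min v w - u) (u - max v w)) :=
          le_max_of_le_right (le_max_right _ _)
        rw [heq] at h'
        linarith
      have hrhs : max s1 (min u s2) = u := by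
        rw [min_eq_left hu2, max_eq_right hu]
      rw [hrhs]
      rcases le_total v w with hvw | hvw
      · rw [min_eq_left hvw] at hminle
        rw [max_eq_right hvw] at hmaxge
        rw [max_eq_left hminle] at h1'
        rw [min_eq_left hmaxge] at h2
        linarith
      · rw [min_eq_right hvw] at hminle
        rw [max_eq_left hvw] at hmaxge
        rw [max_eq_left hminle] at h2'
        rw [min_eq_left hmaxge] at h1
        linarith
/-- The metric center associated with `a ∈ X` is obtained by coordinatewise clamping of
`a` into the secondary rectangle `S_X = [x₂, x_{n−1}] × [y₂, y_{n−1}]`. -/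
theorem center_eq_clamp (X : Finset (ℝ × ℝ)) (hcard : 3 ≤ X.card)
    (a : ℝ × ℝ) (ha : a ∈ X) (ma : ℝ × ℝ) (hma : IsCenterOf X a ma) :
    ma = (max ((sortedFst X)[1]!) (min a.1 ((sortedFst X)[X.card - 2]!)),
          max ((sortedSnd X)[1]!) (min a.2 ((sortedSnd X)[X.card - 2]!))) := by
  obtain ⟨b, hb, c, hc, hba, hca, hbc, hgrom, hcen⟩ := hma
  set s1 := (sortedFst X)[1]! with hs1
  set s2 := (sortedFst X)[X.card - 2]! with hs2
  set t1 := (sortedSnd X)[1]! with ht1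
  set t2 := (sortedSnd X)[X.card - 2]! with ht2
  have hs12 : s1 ≤ s2 := F_s1s2 X Prod.fst hcard
  have ht12 : t1 ≤ t2 := F_s1s2 X Prod.snd hcard
  have hlow_x : a.1 < s1 → s1 ≤ b.1 ∧ s1 ≤ c.1 := fun h =>
    ⟨F_low X Prod.fst hcard ha hb hba h, F_low X Prod.fst hcard ha hc hca h⟩
  have hhigh_x : s2 < a.1 → b.1 ≤ s2 ∧ c.1 ≤ s2 := fun h =>
    ⟨F_high X Prod.fst hcard ha hb hba h, F_high X Prod.fst hcard ha hc hca h⟩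
  have hlow_y : a.2 < t1 → t1 ≤ b.2 ∧ t1 ≤ c.2 := fun h =>
    ⟨F_low X Prod.snd hcard ha hb hba h, F_low X Prod.snd hcard ha hc hca h⟩
  have hhigh_y : t2 < a.2 → b.2 ≤ t2 ∧ c.2 ≤ t2 := fun h =>
    ⟨F_high X Prod.snd hcard ha hb hba h, F_high X Prod.snd hcard ha hc hca h⟩
  set gx := max 0 (max (s1 - a.1) (a.1 - s2)) with hgx
  set gy := max 0 (max (t1 - a.2) (a.2 - t2)) with hgy
  -- lower bounds
  have lbx : gx ≤ gsc a.1 b.1 c.1 := by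
    rw [gsc_eq]
    refine max_le (le_max_left _ _) (max_le ?_ ?_)
    · rcases lt_or_ge a.1 s1 with h | h
      · obtain ⟨hv, hw⟩ := hlow_x h
        have hmin := le_min hv hw
        exact le_trans (by linarith : s1 - a.1 ≤ min b.1 c.1 - a.1)
          (le_max_of_le_right (le_max_left _ _))
      · exact le_trans (by linarith : s1 - a.1 ≤ 0) (le_max_left 0 _)
    · rcases lt_or_ge s2 a.1 with h | h
      · obtain ⟨hv, hw⟩ := hhigh_x h
        have hmax := max_le hv hw
        exact le_trans (by linarith : a.1 - s2 ≤ a.1 - max b.1 c.1)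
          (le_max_of_le_right (le_max_right _ _))
      · exact le_trans (by linarith : a.1 - s2 ≤ 0) (le_max_left 0 _)
  have lby : gy ≤ gsc a.2 b.2 c.2 := by
    rw [gsc_eq]
    refine max_le (le_max_left _ _) (max_le ?_ ?_)
    · rcases lt_or_ge a.2 t1 with h | h
      · obtain ⟨hv, hw⟩ := hlow_y h
        have hmin := le_min hv hw
        exact le_trans (by linarith : t1 - a.2 ≤ min b.2 c.2 - a.2)
          (le_max_of_le_right (le_max_left _ _))
      · exact le_trans (by linarith : t1 - a.2 ≤ 0) (le_max_left 0 _)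
    · rcases lt_or_ge t2 a.2 with h | h
      · obtain ⟨hv, hw⟩ := hhigh_y h
        have hmax := max_le hv hw
        exact le_trans (by linarith : a.2 - t2 ≤ a.2 - max b.2 c.2)
          (le_max_of_le_right (le_max_right _ _))
      · exact le_trans (by linarith : a.2 - t2 ≤ 0) (le_max_left 0 _)
  -- existence of a good pair, giving the upper bound on the pendant length
  have hcard_e : 2 ≤ (X.erase a).card := by
    rw [Finset.card_erase_of_mem ha]; omega
  obtain ⟨p, hp, q, hq, hpq, hA, hB, hC, hD⟩ := pair_lemma (X.erase a) hcard_e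
    (fun r => r.1 ≤ max a.1 s1) (fun r => min a.1 s2 ≤ r.1)
    (fun r => r.2 ≤ max a.2 t1) (fun r => min a.2 t2 ≤ r.2)
    (fun r _ => by
      rcases le_total r.1 (max a.1 s1) with h | h
      · exact Or.inl h
      · exact Or.inr (le_trans (le_trans (min_le_left _ _) (le_max_left _ _)) h))
    (fun r _ => by
      rcases le_total r.2 (max a.2 t1) with h | h
      · exact Or.inl h
      · exact Or.inr (le_trans (le_trans (min_le_left _ _) (le_max_left _ _)) h))
    (F_exlow X Prod.fst hcard ha (max a.1 s1) (le_max_right a.1 s1))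
    (F_exhigh X Prod.fst hcard ha (min a.1 s2) (min_le_right a.1 s2))
    (F_exlow X Prod.snd hcard ha (max a.2 t1) (le_max_right a.2 t1))
    (F_exhigh X Prod.snd hcard ha (min a.2 t2) (min_le_right a.2 t2))
  have hpX : p ∈ X := Finset.mem_of_mem_erase hp
  have hqX : q ∈ X := Finset.mem_of_mem_erase hq
  have hpa : p ≠ a := Finset.ne_of_mem_erase hp
  have hqa : q ≠ a := Finset.ne_of_mem_erase hq
  have ubx : gsc a.1 p.1 q.1 ≤ gx := by
    rw [gsc_eq]
    refine max_le (le_max_left 0 _) (max_le ?_ ?_)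
    · have hm : min p.1 q.1 ≤ max a.1 s1 := by
        rcases hA with h | h
        · exact le_trans (min_le_left _ _) h
        · exact le_trans (min_le_right _ _) h
      rcases le_total a.1 s1 with h' | h'
      · rw [max_eq_right h'] at hm
        exact le_trans (by linarith : min p.1 q.1 - a.1 ≤ s1 - a.1)
          (le_max_of_le_right (le_max_left _ _))
      · rw [max_eq_left h'] at hm
        exact le_trans (by linarith : min p.1 q.1 - a.1 ≤ 0) (le_max_left 0 _)
    · have hm : min a.1 s2 ≤ max p.1 q.1 := by
        rcases hB with h | h
        · exact le_trans h (le_max_left _ _)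
        · exact le_trans h (le_max_right _ _)
      rcases le_total a.1 s2 with h' | h'
      · rw [min_eq_left h'] at hm
        exact le_trans (by linarith : a.1 - max p.1 q.1 ≤ 0) (le_max_left 0 _)
      · rw [min_eq_right h'] at hm
        exact le_trans (by linarith : a.1 - max p.1 q.1 ≤ a.1 - s2)
          (le_max_of_le_right (le_max_right _ _))
  have uby : gsc a.2 p.2 q.2 ≤ gy := by
    rw [gsc_eq]
    refine max_le (le_max_left 0 _) (max_le ?_ ?_)
    · have hm : min p.2 q.2 ≤ max a.2 t1 := by
        rcases hC with h | h
        · exact le_trans (min_le_left _ _) h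
        · exact le_trans (min_le_right _ _) h
      rcases le_total a.2 t1 with h' | h'
      · rw [max_eq_right h'] at hm
        exact le_trans (by linarith : min p.2 q.2 - a.2 ≤ t1 - a.2)
          (le_max_of_le_right (le_max_left _ _))
      · rw [max_eq_left h'] at hm
        exact le_trans (by linarith : min p.2 q.2 - a.2 ≤ 0) (le_max_left 0 _)
    · have hm : min a.2 t2 ≤ max p.2 q.2 := by
        rcases hD with h | h
        · exact le_trans h (le_max_left _ _)
        · exact le_trans h (le_max_right _ _)
      rcases le_total a.2 t2 with h' | h'
      · rw [min_eq_left h'] at hm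
        exact le_trans (by linarith : a.2 - max p.2 q.2 ≤ 0) (le_max_left 0 _)
      · rw [min_eq_right h'] at hm
        exact le_trans (by linarith : a.2 - max p.2 q.2 ≤ a.2 - t2)
          (le_max_of_le_right (le_max_right _ _))
  have hpend_le : pendant X a ≤ gx + gy := by
    have hmem : gromov a p q ∈
        {g : ℝ | ∃ y ∈ X, ∃ z ∈ X, y ≠ a ∧ z ≠ a ∧ y ≠ z ∧ g = gromov a y z} :=
      ⟨p, hpX, q, hqX, hpa, hqa, hpq, rfl⟩
    have hbdd : BddBelow
        {g : ℝ | ∃ y ∈ X, ∃ z ∈ X, y ≠ a ∧ z ≠ a ∧ y ≠ z ∧ g = gromov a y z} := by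
      refine ⟨0, fun g hg => ?_⟩
      obtain ⟨y, -, z, -, -, -, -, rfl⟩ := hg
      exact gromov_nonneg_s12 a y z
    have h1 : pendant X a ≤ gromov a p q := csInf_le hbdd hmem
    have h2 : gromov a p q ≤ gx + gy := by
      rw [gromov_split_s12]
      exact add_le_add ubx uby
    exact le_trans h1 h2
  have hsum : gsc a.1 b.1 c.1 + gsc a.2 b.2 c.2 ≤ gx + gy := by
    rw [← gromov_split_s12, hgrom]
    exact hpend_le
  have heqx : gsc a.1 b.1 c.1 = gx := le_antisymm (by linarith) lbx
  have heqy : gsc a.2 b.2 c.2 = gy := le_antisymm (by linarith) lby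
  -- betweenness of the metric center
  obtain ⟨hab', hac', hbc'⟩ := hcen
  have B1 := betw (d1_coord hab').1
  have B2 := betw (d1_coord hac').1
  have B3 := betw (d1_coord hbc').1
  have C1 := betw (d1_coord hab').2
  have C2 := betw (d1_coord hac').2
  have C3 := betw (d1_coord hbc').2
  have heqx' : max 0 (max (min b.1 c.1 - a.1) (a.1 - max b.1 c.1))
      = max 0 (max (s1 - a.1) (a.1 - s2)) := by
    rw [← gsc_eq, heqx]
  have heqy' : max 0 (max (min b.2 c.2 - a.2) (a.2 - max b.2 c.2))
      = max 0 (max (t1 - a.2) (a.2 - t2)) := by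
    rw [← gsc_eq, heqy]
  have hx : ma.1 = max s1 (min a.1 s2) :=
    coord_main a.1 b.1 c.1 ma.1 s1 s2 hs12 hlow_x hhigh_x heqx'
      B1.1 B1.2 B2.1 B2.2 B3.1 B3.2
  have hy : ma.2 = max t1 (min a.2 t2) :=
    coord_main a.2 b.2 c.2 ma.2 t1 t2 ht12 hlow_y hhigh_y heqy'
      C1.1 C1.2 C2.1 C2.2 C3.1 C3.2
  rw [Prod.ext_iff]
  exact ⟨hx, hy⟩
end

section
/- Let X ⊂ ℝ²₁ be a finite subspace with |X| ≥ 3 and secondary rectangle S_X. Then for every a ∈ X, the pendant length of a equals the d₁-distance from a to S_X: d̲(a) = inf{ d₁(a,p) : p ∈ S_X }. -/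
noncomputable def dI (t u v : ℝ) : ℝ := max (min u v - t) (max (t - max u v) 0)

set_option maxHeartbeats 2000000 in
lemma g1_eq (t u v : ℝ) : (|t - u| + |t - v| - |u - v|) / 2 = dI t u v := by
  unfold dI
  rcases abs_cases (t - u) with ⟨h1, h1'⟩ | ⟨h1, h1'⟩ <;>
  rcases abs_cases (t - v) with ⟨h2, h2'⟩ | ⟨h2, h2'⟩ <;>
  rcases abs_cases (u - v) with ⟨h3, h3'⟩ | ⟨h3, h3'⟩ <;>
  rcases min_cases u v with ⟨h4, h4'⟩ | ⟨h4, h4'⟩ <;>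
  rcases max_cases u v with ⟨h5, h5'⟩ | ⟨h5, h5'⟩ <;>
  rcases max_cases (t - max u v) (0:ℝ) with ⟨h6, h6'⟩ | ⟨h6, h6'⟩ <;>
  rcases max_cases (min u v - t) (max (t - max u v) (0:ℝ)) with ⟨h7, h7'⟩ | ⟨h7, h7'⟩ <;>
  linarith

lemma dI_nonneg (t u v : ℝ) : 0 ≤ dI t u v :=
  le_trans (le_max_right _ _) (le_max_right _ _)

lemma clamp_abs (t lo hi : ℝ) (h : lo ≤ hi) :
    |t - max lo (min t hi)| = max (lo - t) (max (t - hi) 0) := by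
  rcases abs_cases (t - max lo (min t hi)) with ⟨h1, h1'⟩ | ⟨h1, h1'⟩ <;>
  rcases min_cases t hi with ⟨h4, h4'⟩ | ⟨h4, h4'⟩ <;>
  rcases max_cases lo (min t hi) with ⟨h5, h5'⟩ | ⟨h5, h5'⟩ <;>
  rcases max_cases (t - hi) (0:ℝ) with ⟨h6, h6'⟩ | ⟨h6, h6'⟩ <;>
  rcases max_cases (lo - t) (max (t - hi) (0:ℝ)) with ⟨h7, h7'⟩ | ⟨h7, h7'⟩ <;>
  linarith


lemma list_decomp {α : Type*} (L : List α) (h : 2 ≤ L.length) :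
    ∃ x₀ x₁ t, L = x₀ :: x₁ :: t := by
  match L with
  | a :: b :: t => exact ⟨a, b, t, rfl⟩
  | [] => simp at h
  | [a] => simp at h


lemma countP_lt_second (m : Multiset ℝ) (h3 : 3 ≤ Multiset.card m) :
    Multiset.countP (fun x => x < (Multiset.sort m (· ≤ ·))[1]!) m ≤ 1 := by
  obtain ⟨x₀, x₁, t, hL⟩ := list_decomp (Multiset.sort m (· ≤ ·))
    (by rw [Multiset.length_sort]; omega)
  have hs := Multiset.pairwise_sort m (· ≤ ·)
  rw [hL] at hs
  have h1 : (Multiset.sort m (· ≤ ·))[1]! = x₁ := by rw [hL]; simp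
  rw [h1]
  conv_lhs => rw [← Multiset.sort_eq m (· ≤ ·), hL]
  rw [Multiset.coe_countP]
  rw [List.countP_cons, List.countP_cons]
  have ht : ∀ x ∈ t, x₁ ≤ x := (List.pairwise_cons.mp (List.pairwise_cons.mp hs).2).1
  have h0 : List.countP (fun x => decide (x < x₁)) t = 0 :=
    List.countP_eq_zero.mpr (fun x hx => by simpa using not_lt.2 (ht x hx))
  rw [h0]
  simp only [decide_eq_true_eq]
  split_ifs <;> first | omega | linarith


lemma countP_le_second (m : Multiset ℝ) (h3 : 3 ≤ Multiset.card m) :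
    2 ≤ Multiset.countP (fun x => x ≤ (Multiset.sort m (· ≤ ·))[1]!) m := by
  obtain ⟨x₀, x₁, t, hL⟩ := list_decomp (Multiset.sort m (· ≤ ·))
    (by rw [Multiset.length_sort]; omega)
  have hs := Multiset.pairwise_sort m (· ≤ ·)
  rw [hL] at hs
  have hx01 : x₀ ≤ x₁ := (List.pairwise_cons.mp hs).1 x₁ (by simp)
  have h1 : (Multiset.sort m (· ≤ ·))[1]! = x₁ := by rw [hL]; simp
  rw [h1]
  conv_rhs => rw [← Multiset.sort_eq m (· ≤ ·), hL]
  rw [Multiset.coe_countP]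
  rw [List.countP_cons, List.countP_cons]
  simp only [decide_eq_true_eq]
  split_ifs <;> first | omega | linarith

lemma sort_neg (m : Multiset ℝ) :
    Multiset.sort (m.map (fun x => -x)) (· ≤ ·) =
      ((Multiset.sort m (· ≤ ·)).map (fun x => -x)).reverse := by
  haveI : IsAntisymm ℝ (· ≤ ·) := ⟨fun _ _ => le_antisymm⟩
  refine (fun hp h1 h2 => List.Perm.eq_of_pairwise' (r := (· ≤ ·)) h1 h2 hp) ?_ ?_ ?_
  · rw [← Multiset.coe_eq_coe, Multiset.sort_eq, Multiset.coe_reverse, ← Multiset.map_coe,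
      Multiset.sort_eq]
  · exact Multiset.pairwise_sort _ _
  · rw [List.pairwise_reverse, List.pairwise_map]
    exact (Multiset.pairwise_sort m (· ≤ ·)).imp (fun hab => by simp [hab])

lemma second_neg (m : Multiset ℝ) (h3 : 3 ≤ Multiset.card m) :
    (Multiset.sort (m.map (fun x => -x)) (· ≤ ·))[1]! =
      -((Multiset.sort m (· ≤ ·))[Multiset.card m - 2]!) := by
  have hlen : (Multiset.sort m (· ≤ ·)).length = Multiset.card m := Multiset.length_sort _
  rw [sort_neg]
  have hl2 : ((Multiset.sort m (· ≤ ·)).map (fun x => -x)).reverse.length = Multiset.card m := by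
    simp [hlen]
  rw [getElem!_pos _ 1 (by omega), getElem!_pos _ (Multiset.card m - 2) (by omega),
    List.getElem_reverse, List.getElem_map]
  congr 2
  simp [hlen]
  omega

lemma countP_gt_secondlast (m : Multiset ℝ) (h3 : 3 ≤ Multiset.card m) :
    Multiset.countP (fun x => (Multiset.sort m (· ≤ ·))[Multiset.card m - 2]! < x) m ≤ 1 := by
  have h3' : 3 ≤ Multiset.card (m.map (fun x => -x)) := by rwa [Multiset.card_map]
  have h := countP_lt_second (m.map (fun x => -x)) h3'
  rw [second_neg m h3, Multiset.countP_map] at h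
  rw [Multiset.countP_eq_card_filter]
  refine le_trans (le_of_eq (congrArg Multiset.card ?_)) h
  apply Multiset.filter_congr
  intro x _
  simp

lemma countP_ge_secondlast (m : Multiset ℝ) (h3 : 3 ≤ Multiset.card m) :
    2 ≤ Multiset.countP (fun x => (Multiset.sort m (· ≤ ·))[Multiset.card m - 2]! ≤ x) m := by
  have h3' : 3 ≤ Multiset.card (m.map (fun x => -x)) := by rwa [Multiset.card_map]
  have h := countP_le_second (m.map (fun x => -x)) h3'
  rw [second_neg m h3, Multiset.countP_map] at h
  rw [Multiset.countP_eq_card_filter]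
  refine le_trans h (le_of_eq (congrArg Multiset.card ?_))
  apply Multiset.filter_congr
  intro x _
  simp

lemma countP_map_finset (X : Finset (ℝ × ℝ)) (f : ℝ × ℝ → ℝ) (p : ℝ → Prop) [DecidablePred p] :
    Multiset.countP p (X.1.map f) = (X.filter (fun q => p (f q))).card := by
  rw [Multiset.countP_map]; rfl

lemma key_facts (X : Finset (ℝ × ℝ)) (h3 : 3 ≤ X.card) (f : ℝ × ℝ → ℝ) :
    ((Multiset.sort (X.1.map f) (· ≤ ·))[1]! ≤
        (Multiset.sort (X.1.map f) (· ≤ ·))[X.card - 2]!) ∧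
    (X.filter (fun q => f q < (Multiset.sort (X.1.map f) (· ≤ ·))[1]!)).card ≤ 1 ∧
    2 ≤ (X.filter (fun q => f q ≤ (Multiset.sort (X.1.map f) (· ≤ ·))[1]!)).card ∧
    (X.filter (fun q => (Multiset.sort (X.1.map f) (· ≤ ·))[X.card - 2]! < f q)).card ≤ 1 ∧
    2 ≤ (X.filter (fun q => (Multiset.sort (X.1.map f) (· ≤ ·))[X.card - 2]! ≤ f q)).card := by
  have hcm : Multiset.card (X.1.map f) = X.card := by
    rw [Multiset.card_map]; rfl
  have hm : 3 ≤ Multiset.card (X.1.map f) := by rw [hcm]; exact h3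
  have hlen : (Multiset.sort (X.1.map f) (· ≤ ·)).length = X.card := by
    rw [Multiset.length_sort, hcm]
  refine ⟨?_, ?_, ?_, ?_, ?_⟩
  · have h1lt : 1 < (Multiset.sort (X.1.map f) (· ≤ ·)).length := by omega
    have h2lt : X.card - 2 < (Multiset.sort (X.1.map f) (· ≤ ·)).length := by omega
    have := List.Pairwise.rel_get_of_le (Multiset.pairwise_sort (X.1.map f) (· ≤ ·))
      (a := ⟨1, h1lt⟩) (b := ⟨X.card - 2, h2lt⟩) (by simp [Fin.le_def]; omega)
    rw [getElem!_pos (Multiset.sort (X.1.map f) (· ≤ ·)) 1 h1lt,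
      getElem!_pos (Multiset.sort (X.1.map f) (· ≤ ·)) (X.card - 2) h2lt]
    simpa [List.get_eq_getElem] using this
  · have := countP_lt_second (X.1.map f) hm
    rwa [countP_map_finset X f (fun x => x < (Multiset.sort (X.1.map f) (· ≤ ·))[1]!)] at this
  · have := countP_le_second (X.1.map f) hm
    rwa [countP_map_finset X f (fun x => x ≤ (Multiset.sort (X.1.map f) (· ≤ ·))[1]!)] at this
  · have := countP_gt_secondlast (X.1.map f) hm
    rw [hcm] at this
    rwa [countP_map_finset X f
      (fun x => (Multiset.sort (X.1.map f) (· ≤ ·))[X.card - 2]! < x)] at this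
  · have := countP_ge_secondlast (X.1.map f) hm
    rw [hcm] at this
    rwa [countP_map_finset X f
      (fun x => (Multiset.sort (X.1.map f) (· ≤ ·))[X.card - 2]! ≤ x)] at this

lemma select (Y : Finset (ℝ × ℝ)) (hY : 2 ≤ Y.card) (u₁ v₁ u₂ v₂ : ℝ)
    (hv₂ : v₂ ≤ u₂)
    (e1 : ∃ p ∈ Y, p.1 ≤ u₁) (e2 : ∃ p ∈ Y, v₁ ≤ p.1)
    (e3 : ∃ p ∈ Y, p.2 ≤ u₂) (e4 : ∃ p ∈ Y, v₂ ≤ p.2) (hv₁ : v₁ ≤ u₁) :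
    ∃ b ∈ Y, ∃ c ∈ Y, b ≠ c ∧ (b.1 ≤ u₁ ∨ c.1 ≤ u₁) ∧ (v₁ ≤ b.1 ∨ v₁ ≤ c.1) ∧
      (b.2 ≤ u₂ ∨ c.2 ≤ u₂) ∧ (v₂ ≤ b.2 ∨ v₂ ≤ c.2) := by
  obtain ⟨p, hp, hp1⟩ := e1
  obtain ⟨q, hq, hq1⟩ := e2
  obtain ⟨r, hr, hr1⟩ := e3
  obtain ⟨s, hs, hs1⟩ := e4
  by_cases hpq : p = q
  · have hc2 : v₁ ≤ p.1 := by rw [hpq]; exact hq1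
    by_cases h3p : p.2 ≤ u₂
    · by_cases hsp : s = p
      · obtain ⟨c, hc, hcp⟩ := Finset.exists_mem_ne (show 1 < Y.card by omega) p
        exact ⟨p, hp, c, hc, Ne.symm hcp, Or.inl hp1, Or.inl hc2,
          Or.inl h3p, Or.inl (hsp ▸ hs1)⟩
      · exact ⟨p, hp, s, hs, Ne.symm hsp, Or.inl hp1, Or.inl hc2, Or.inl h3p, Or.inr hs1⟩
    · have hrp : r ≠ p := fun h => h3p (h ▸ hr1)
      have h4p : v₂ ≤ p.2 := le_trans hv₂ (le_of_not_ge h3p)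
      exact ⟨p, hp, r, hr, Ne.symm hrp, Or.inl hp1, Or.inl hc2, Or.inr hr1, Or.inl h4p⟩
  · by_cases h34 : (p.2 ≤ u₂ ∨ q.2 ≤ u₂) ∧ (v₂ ≤ p.2 ∨ v₂ ≤ q.2)
    · exact ⟨p, hp, q, hq, hpq, Or.inl hp1, Or.inr hq1, h34.1, h34.2⟩
    · rcases not_and_or.mp h34 with h | h
      · push_neg at h
        obtain ⟨hup, huq⟩ := h
        have hrp : r ≠ p := fun hh => (not_le.mpr hup) (hh ▸ hr1)
        have hrq : r ≠ q := fun hh => (not_le.mpr huq) (hh ▸ hr1)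
        by_cases hrv : v₁ ≤ r.1
        · exact ⟨r, hr, p, hp, hrp, Or.inr hp1, Or.inl hrv, Or.inl hr1,
            Or.inr (le_trans hv₂ (le_of_lt hup))⟩
        · exact ⟨r, hr, q, hq, hrq, Or.inl (le_trans (le_of_not_ge hrv) hv₁), Or.inr hq1,
            Or.inl hr1, Or.inr (le_trans hv₂ (le_of_lt huq))⟩
      · push_neg at h
        obtain ⟨hvp, hvq⟩ := h
        have hsp : s ≠ p := fun hh => (not_le.mpr hvp) (hh ▸ hs1)
        have hsq : s ≠ q := fun hh => (not_le.mpr hvq) (hh ▸ hs1)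
        by_cases hsv : v₁ ≤ s.1
        · exact ⟨s, hs, p, hp, hsp, Or.inr hp1, Or.inl hsv,
            Or.inr (le_trans (le_of_lt hvp) hv₂), Or.inl hs1⟩
        · exact ⟨s, hs, q, hq, hsq, Or.inl (le_trans (le_of_not_ge hsv) hv₁), Or.inr hq1,
            Or.inr (le_trans (le_of_lt hvq) hv₂), Or.inl hs1⟩

lemma gromov_decomp (a b c : ℝ × ℝ) : gromov a b c = dI a.1 b.1 c.1 + dI a.2 b.2 c.2 := by
  have h1 := g1_eq a.1 b.1 c.1
  have h2 := g1_eq a.2 b.2 c.2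
  unfold gromov d1
  linarith

lemma coord_lb (X : Finset (ℝ × ℝ)) (f : ℝ × ℝ → ℝ) (e₁ e₂ : ℝ)
    (hA : (X.filter (fun q => f q < e₁)).card ≤ 1)
    (hC : (X.filter (fun q => e₂ < f q)).card ≤ 1)
    (a b c : ℝ × ℝ) (ha : a ∈ X) (hb : b ∈ X) (hc : c ∈ X) (hba : b ≠ a) (hca : c ≠ a) :
    max (e₁ - f a) (max (f a - e₂) 0) ≤ dI (f a) (f b) (f c) := by
  have h0 := dI_nonneg (f a) (f b) (f c)
  apply max_le
  · by_cases h : e₁ ≤ f a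
    · linarith
    · push_neg at h
      have hbe : ¬ f b < e₁ := fun hb' => by
        have : 1 < (X.filter (fun q => f q < e₁)).card := Finset.one_lt_card.mpr
          ⟨a, Finset.mem_filter.mpr ⟨ha, h⟩, b, Finset.mem_filter.mpr ⟨hb, hb'⟩, Ne.symm hba⟩
        omega
      have hce : ¬ f c < e₁ := fun hc' => by
        have : 1 < (X.filter (fun q => f q < e₁)).card := Finset.one_lt_card.mpr
          ⟨a, Finset.mem_filter.mpr ⟨ha, h⟩, c, Finset.mem_filter.mpr ⟨hc, hc'⟩, Ne.symm hca⟩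
        omega
      have hmin : e₁ ≤ min (f b) (f c) := le_min (not_lt.1 hbe) (not_lt.1 hce)
      calc e₁ - f a ≤ min (f b) (f c) - f a := by linarith
        _ ≤ dI (f a) (f b) (f c) := le_max_left _ _
  · apply max_le
    · by_cases h : f a ≤ e₂
      · linarith
      · push_neg at h
        have hbe : ¬ e₂ < f b := fun hb' => by
          have : 1 < (X.filter (fun q => e₂ < f q)).card := Finset.one_lt_card.mpr
            ⟨a, Finset.mem_filter.mpr ⟨ha, h⟩, b, Finset.mem_filter.mpr ⟨hb, hb'⟩, Ne.symm hba⟩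
          omega
        have hce : ¬ e₂ < f c := fun hc' => by
          have : 1 < (X.filter (fun q => e₂ < f q)).card := Finset.one_lt_card.mpr
            ⟨a, Finset.mem_filter.mpr ⟨ha, h⟩, c, Finset.mem_filter.mpr ⟨hc, hc'⟩, Ne.symm hca⟩
          omega
        have hmax : max (f b) (f c) ≤ e₂ := max_le (not_lt.1 hbe) (not_lt.1 hce)
        calc f a - e₂ ≤ f a - max (f b) (f c) := by linarith
          _ ≤ max (f a - max (f b) (f c)) 0 := le_max_left _ _
          _ ≤ dI (f a) (f b) (f c) := le_max_right _ _
    · exact h0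


/-- The pendant length of `a ∈ X` equals the Manhattan distance from `a` to the
secondary rectangle `S_X`. -/
theorem pendant_eq_dist_to_secondary_rect (X : Finset (ℝ × ℝ)) (hcard : 3 ≤ X.card)
    (a : ℝ × ℝ) (ha : a ∈ X) :
    pendant X a = sInf {r : ℝ | ∃ p ∈ secondaryRect X, r = d1 a p} := by
  obtain ⟨hx12, hxA, hxB, hxC, hxD⟩ := key_facts X hcard Prod.fst
  obtain ⟨hy12, hyA, hyB, hyC, hyD⟩ := key_facts X hcard Prod.snd
  have hfst : sortedFst X = Multiset.sort (X.1.map Prod.fst) (· ≤ ·) := rfl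
  have hsnd : sortedSnd X = Multiset.sort (X.1.map Prod.snd) (· ≤ ·) := rfl
  rw [← hfst] at hx12 hxA hxB hxC hxD
  rw [← hsnd] at hy12 hyA hyB hyC hyD
  set x2 := (sortedFst X)[1]! with hx2def
  set xn1 := (sortedFst X)[X.card - 2]! with hxn1def
  set y2 := (sortedSnd X)[1]! with hy2def
  set yn1 := (sortedSnd X)[X.card - 2]! with hyn1def
  set Dx := max (x2 - a.1) (max (a.1 - xn1) 0) with hDxdef
  set Dy := max (y2 - a.2) (max (a.2 - yn1) 0) with hDydef
  have hDx0 : 0 ≤ Dx := le_trans (le_max_right _ _) (le_max_right _ _)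
  have hDy0 : 0 ≤ Dy := le_trans (le_max_right _ _) (le_max_right _ _)
  have hDxa : x2 - a.1 ≤ Dx := le_max_left _ _
  have hDxb : a.1 - xn1 ≤ Dx := le_trans (le_max_left _ _) (le_max_right _ _)
  have hDya : y2 - a.2 ≤ Dy := le_max_left _ _
  have hDyb : a.2 - yn1 ≤ Dy := le_trans (le_max_left _ _) (le_max_right _ _)
  -- the pendant set
  set S : Set ℝ := {g : ℝ | ∃ y ∈ X, ∃ z ∈ X, y ≠ a ∧ z ≠ a ∧ y ≠ z ∧ g = gromov a y z} with hSdef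
  have hSlb : ∀ g ∈ S, Dx + Dy ≤ g := by
    rintro g ⟨b, hb, c, hc, hba, hca, hbc, rfl⟩
    rw [gromov_decomp]
    have h1 := coord_lb X Prod.fst x2 xn1 hxA hxC a b c ha hb hc hba hca
    have h2 := coord_lb X Prod.snd y2 yn1 hyA hyC a b c ha hb hc hba hca
    exact add_le_add h1 h2
  -- an achieving pair
  have hY2 : 2 ≤ (X.erase a).card := by
    rw [Finset.card_erase_of_mem ha]; omega
  have hex : ∀ (f : ℝ × ℝ → ℝ) (e : ℝ), 2 ≤ (X.filter (fun q => f q ≤ e)).card →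
      ∃ p ∈ X.erase a, f p ≤ e := by
    intro f e hcard2
    obtain ⟨b, hbf, hbne⟩ := Finset.exists_mem_ne
      (show 1 < (X.filter (fun q => f q ≤ e)).card by omega) a
    obtain ⟨hbX, hbe⟩ := Finset.mem_filter.mp hbf
    exact ⟨b, Finset.mem_erase.mpr ⟨hbne, hbX⟩, hbe⟩
  have hex' : ∀ (f : ℝ × ℝ → ℝ) (e : ℝ), 2 ≤ (X.filter (fun q => e ≤ f q)).card →
      ∃ p ∈ X.erase a, e ≤ f p := by
    intro f e hcard2
    obtain ⟨b, hbf, hbne⟩ := Finset.exists_mem_ne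
      (show 1 < (X.filter (fun q => e ≤ f q)).card by omega) a
    obtain ⟨hbX, hbe⟩ := Finset.mem_filter.mp hbf
    exact ⟨b, Finset.mem_erase.mpr ⟨hbne, hbX⟩, hbe⟩
  obtain ⟨b, hbY, c, hcY, hbc, hcov1, hcov2, hcov3, hcov4⟩ :=
    select (X.erase a) hY2 (a.1 + Dx) (a.1 - Dx) (a.2 + Dy) (a.2 - Dy)
      (by linarith)
      (by obtain ⟨p, hp, hpe⟩ := hex Prod.fst x2 hxB; exact ⟨p, hp, by linarith⟩)
      (by obtain ⟨p, hp, hpe⟩ := hex' Prod.fst xn1 hxD; exact ⟨p, hp, by linarith⟩)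
      (by obtain ⟨p, hp, hpe⟩ := hex Prod.snd y2 hyB; exact ⟨p, hp, by linarith⟩)
      (by obtain ⟨p, hp, hpe⟩ := hex' Prod.snd yn1 hyD; exact ⟨p, hp, by linarith⟩)
      (by linarith)
  obtain ⟨hbne, hbX⟩ := Finset.mem_erase.mp hbY
  obtain ⟨hcne, hcX⟩ := Finset.mem_erase.mp hcY
  have hg0mem : gromov a b c ∈ S := ⟨b, hbX, c, hcX, hbne, hcne, hbc, rfl⟩
  have hg0le : gromov a b c ≤ Dx + Dy := by
    rw [gromov_decomp]
    have h1 : dI a.1 b.1 c.1 ≤ Dx := by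
      apply max_le
      · rcases hcov1 with h | h
        · have := min_le_left b.1 c.1; linarith
        · have := min_le_right b.1 c.1; linarith
      · apply max_le
        · rcases hcov2 with h | h
          · have := le_max_left b.1 c.1; linarith
          · have := le_max_right b.1 c.1; linarith
        · exact hDx0
    have h2 : dI a.2 b.2 c.2 ≤ Dy := by
      apply max_le
      · rcases hcov3 with h | h
        · have := min_le_left b.2 c.2; linarith
        · have := min_le_right b.2 c.2; linarith
      · apply max_le
        · rcases hcov4 with h | h
          · have := le_max_left b.2 c.2; linarith
          · have := le_max_right b.2 c.2; linarith
        · exact hDy0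
    exact add_le_add h1 h2
  have hpendant : pendant X a = Dx + Dy := by
    have hbdd : BddBelow S := ⟨Dx + Dy, fun g hg => hSlb g hg⟩
    exact le_antisymm (le_trans (csInf_le hbdd hg0mem) hg0le)
      (le_csInf ⟨_, hg0mem⟩ hSlb)
  -- the rectangle side
  set R : Set ℝ := {r : ℝ | ∃ p ∈ secondaryRect X, r = d1 a p} with hRdef
  have hrect : secondaryRect X = Set.Icc x2 xn1 ×ˢ Set.Icc y2 yn1 := rfl
  set p₀ : ℝ × ℝ := (max x2 (min a.1 xn1), max y2 (min a.2 yn1)) with hp₀def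
  have hp₀mem : p₀ ∈ secondaryRect X := by
    rw [hrect]
    refine Set.mem_prod.mpr ⟨Set.mem_Icc.mpr ⟨le_max_left _ _, ?_⟩,
      Set.mem_Icc.mpr ⟨le_max_left _ _, ?_⟩⟩
    · exact max_le hx12 (min_le_right _ _)
    · exact max_le hy12 (min_le_right _ _)
  have hd0 : d1 a p₀ = Dx + Dy := by
    show |a.1 - max x2 (min a.1 xn1)| + |a.2 - max y2 (min a.2 yn1)| = Dx + Dy
    rw [clamp_abs a.1 x2 xn1 hx12, clamp_abs a.2 y2 yn1 hy12]
  have hr0mem : d1 a p₀ ∈ R := ⟨p₀, hp₀mem, rfl⟩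
  have hRlb : ∀ r ∈ R, Dx + Dy ≤ r := by
    rintro r ⟨p, hp, rfl⟩
    rw [hrect] at hp
    obtain ⟨hp1, hp2⟩ := Set.mem_prod.mp hp
    obtain ⟨hp1a, hp1b⟩ := Set.mem_Icc.mp hp1
    obtain ⟨hp2a, hp2b⟩ := Set.mem_Icc.mp hp2
    have hb1 : Dx ≤ |a.1 - p.1| := by
      apply max_le
      · have := neg_abs_le (a.1 - p.1); linarith
      · apply max_le
        · have := le_abs_self (a.1 - p.1); linarith
        · exact abs_nonneg _
    have hb2 : Dy ≤ |a.2 - p.2| := by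
      apply max_le
      · have := neg_abs_le (a.2 - p.2); linarith
      · apply max_le
        · have := le_abs_self (a.2 - p.2); linarith
        · exact abs_nonneg _
    show Dx + Dy ≤ |a.1 - p.1| + |a.2 - p.2|
    exact add_le_add hb1 hb2
  have hR : sInf R = Dx + Dy := by
    have hbdd : BddBelow R := ⟨Dx + Dy, fun r hr => hRlb r hr⟩
    exact le_antisymm (le_trans (csInf_le hbdd hr0mem) (le_of_eq hd0))
      (le_csInf ⟨_, hr0mem⟩ hRlb)
  rw [← hRdef] at *
  show pendant X a = sInf R
  rw [hpendant, hR]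
end
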